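/- arXiv:1604.05241 — 8 statements merged into one kernel-verified Lean document; each statement's English description precedes it below -/
import Mathlib

section
/- Let X be a compact Hausdorff space with a continuous flow φ^σ, Σ ⊆ X × X closed containing the invariant diagonal Δ, and W : (X × X) \ Σ → ℤ continuous. Assume axiom (A4): for (u¹,u²) ∈ Σ \ Δ there is ε₀ > 0 with (φ^σ(u¹),φ^σ(u²)) ∉ Σ for σ ∈ (−ε₀,ε₀) \ {0}; and axiom (A5): for such pairs, W(φ^σ(u¹),φ^σ(u²)) > W(φ^{σ'}(u¹),φ^{σ'}(u²)) for all σ ∈ (−ε₀,0) and σ' ∈ (0,ε₀). Then for any (u¹,u²) ∈ (X×X) \ Δ, the map σ ↦ W(φ^σ(u¹),φ^σ(u²)), defined on ℝ \ A where A = {σ : (φ^σ(u¹),φ^σ(u²)) ∈ Σ}, is non-increasing and constant on the connected components of ℝ \ A. -/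
open Filter Topology Set

/-- under axioms (A4), (A5), for any off-diagonal pair the map
σ ↦ W(φ^σ u¹, φ^σ u²), defined on ℝ \ A where A is the set of crossing
times, is non-increasing and constant on the connected components of ℝ \ A. -/
theorem stmt_5 {X : Type*} [TopologicalSpace X] [CompactSpace X] [T2Space X]
    (φ : ℝ → X → X)
    (hφc : Continuous fun p : ℝ × X => φ p.1 p.2)
    (hφ0 : ∀ x, φ 0 x = x)
    (hφadd : ∀ σ σ' x, φ (σ + σ') x = φ σ (φ σ' x))
    (S : Set (X × X)) (hScl : IsClosed S)
    (hΔS : ∀ x : X, (x, x) ∈ S)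
    (W : X → X → ℤ)
    (hWc : ContinuousOn (fun q : X × X => W q.1 q.2) Sᶜ)
    (hA4 : ∀ u v : X, (u, v) ∈ S → u ≠ v →
      ∃ ε > (0 : ℝ), ∀ σ : ℝ, σ ≠ 0 → |σ| < ε → (φ σ u, φ σ v) ∉ S)
    (hA5 : ∀ u v : X, (u, v) ∈ S → u ≠ v →
      ∃ ε > (0 : ℝ), ∀ σ σ' : ℝ, -ε < σ → σ < 0 → 0 < σ' → σ' < ε →
        W (φ σ' u) (φ σ' v) < W (φ σ u) (φ σ v))
    (u v : X) (huv : u ≠ v) :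
    (∀ σ₁ σ₂ : ℝ, σ₁ ≤ σ₂ →
      (φ σ₁ u, φ σ₁ v) ∉ S → (φ σ₂ u, φ σ₂ v) ∉ S →
        W (φ σ₂ u) (φ σ₂ v) ≤ W (φ σ₁ u) (φ σ₁ v)) ∧
    (∀ σ₁ σ₂ : ℝ, σ₁ ≤ σ₂ →
      (∀ σ ∈ Icc σ₁ σ₂, (φ σ u, φ σ v) ∉ S) →
        W (φ σ₁ u) (φ σ₁ v) = W (φ σ₂ u) (φ σ₂ v)) := by
  -- the orbit curve
  have hgc : Continuous fun t : ℝ => ((φ t u, φ t v) : X × X) := by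
    exact (hφc.comp (continuous_id.prodMk continuous_const)).prodMk
      (hφc.comp (continuous_id.prodMk continuous_const))
  -- injectivity of the flow: off-diagonal stays off-diagonal
  have hne : ∀ τ : ℝ, φ τ u ≠ φ τ v := by
    intro τ h
    apply huv
    have h2 := congrArg (φ (-τ)) h
    rwa [← hφadd, ← hφadd, neg_add_cancel, hφ0, hφ0] at h2
  -- L1: local constancy off S
  have L1 : ∀ τ : ℝ, (φ τ u, φ τ v) ∉ S → ∃ ε > (0:ℝ), ∀ s, |s - τ| < ε →
      (φ s u, φ s v) ∉ S ∧ W (φ s u) (φ s v) = W (φ τ u) (φ τ v) := by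
    intro τ hτ
    have hmem : Sᶜ ∈ 𝓝 ((φ τ u, φ τ v) : X × X) := hScl.isOpen_compl.mem_nhds hτ
    have h1 : ∀ᶠ s in 𝓝 τ, ((φ s u, φ s v) : X × X) ∈ Sᶜ :=
      hgc.continuousAt.preimage_mem_nhds hmem
    have hct : ContinuousAt ((fun q : X × X => W q.1 q.2) ∘ fun s : ℝ => (φ s u, φ s v)) τ :=
      ContinuousAt.comp (hWc.continuousAt hmem) hgc.continuousAt
    have h2 : ∀ᶠ s in 𝓝 τ, W (φ s u) (φ s v) = W (φ τ u) (φ τ v) := by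
      have : {W (φ τ u) (φ τ v)} ∈ 𝓝 (W (φ τ u) (φ τ v)) := by
        exact (isOpen_discrete _).mem_nhds rfl
      filter_upwards [hct.preimage_mem_nhds this] with s hs using hs
    obtain ⟨ε, hε, h⟩ := Metric.eventually_nhds_iff.mp (h1.and h2)
    exact ⟨ε, hε, fun s hs => by
      have := h (show dist s τ < ε by rwa [Real.dist_eq]); exact this⟩
  -- L2: crossing behaviour
  have L2 : ∀ τ : ℝ, (φ τ u, φ τ v) ∈ S → ∃ ε > (0:ℝ),
      (∀ s, s ≠ τ → |s - τ| < ε → (φ s u, φ s v) ∉ S) ∧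
      (∀ s s', τ - ε < s → s < τ → τ < s' → s' < τ + ε →
        W (φ s' u) (φ s' v) < W (φ s u) (φ s v)) := by
    intro τ hτ
    obtain ⟨ε₁, hε₁, h4⟩ := hA4 _ _ hτ (hne τ)
    obtain ⟨ε₂, hε₂, h5⟩ := hA5 _ _ hτ (hne τ)
    refine ⟨min ε₁ ε₂, lt_min hε₁ hε₂, ?_, ?_⟩
    · intro s hs habs
      have h := h4 (s - τ) (sub_ne_zero.mpr hs)
        (lt_of_lt_of_le habs (min_le_left _ _))
      rwa [← hφadd, ← hφadd, sub_add_cancel] at h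
    · intro s s' h1 h2 h3 h4'
      have hm := min_le_right ε₁ ε₂
      have h := h5 (s - τ) (s' - τ) (by linarith) (by linarith) (by linarith)
        (by linarith)
      rwa [← hφadd, ← hφadd, ← hφadd, ← hφadd, sub_add_cancel, sub_add_cancel] at h
  -- main monotonicity claim
  have main : ∀ σ₁ σ₂ : ℝ, σ₁ ≤ σ₂ →
      (φ σ₁ u, φ σ₁ v) ∉ S → (φ σ₂ u, φ σ₂ v) ∉ S →
      W (φ σ₂ u) (φ σ₂ v) ≤ W (φ σ₁ u) (φ σ₁ v) := by
    intro σ₁ σ₂ h12 h1 h2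
    set T : Set ℝ := {t | t ∈ Icc σ₁ σ₂ ∧ ∀ s, σ₁ ≤ s → s ≤ t →
      (φ s u, φ s v) ∉ S → W (φ s u) (φ s v) ≤ W (φ σ₁ u) (φ σ₁ v)} with hTdef
    have hσ₁T : σ₁ ∈ T := by
      refine ⟨⟨le_refl _, h12⟩, fun s hs hs' _ => ?_⟩
      have : s = σ₁ := le_antisymm hs' hs
      rw [this]
    have hbdd : BddAbove T := ⟨σ₂, fun t ht => ht.1.2⟩
    have hTne : T.Nonempty := ⟨σ₁, hσ₁T⟩
    set c := sSup T with hcdef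
    have hc1 : σ₁ ≤ c := le_csSup hbdd hσ₁T
    have hc2 : c ≤ σ₂ := csSup_le hTne fun t ht => ht.1.2
    have hlt : ∀ s, σ₁ ≤ s → s < c → (φ s u, φ s v) ∉ S →
        W (φ s u) (φ s v) ≤ W (φ σ₁ u) (φ σ₁ v) := by
      intro s hs hsc hsS
      obtain ⟨t, htT, hst⟩ := exists_lt_of_lt_csSup hTne hsc
      exact htT.2 s hs hst.le hsS
    have hcT : ∀ s, σ₁ ≤ s → s ≤ c → (φ s u, φ s v) ∉ S →
        W (φ s u) (φ s v) ≤ W (φ σ₁ u) (φ σ₁ v) := by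
      intro s hs hsc hsS
      rcases lt_or_eq_of_le hsc with h | h
      · exact hlt s hs h hsS
      · rcases eq_or_lt_of_le hs with h' | h'
        · rw [← h']
        · obtain ⟨ε, hε, hloc⟩ := L1 s hsS
          obtain ⟨s', hs'1, hs'2⟩ :=
            exists_between (show max σ₁ (s - ε) < s from
              max_lt h' (by linarith))
          have habs : |s' - s| < ε := by
            have := le_max_right σ₁ (s - ε)
            rw [abs_lt]; constructor <;> [linarith [lt_of_le_of_lt this hs'1]; linarith]
          obtain ⟨hs'S, hs'W⟩ := hloc s' habs
          rw [← hs'W]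
          exact hlt s' (le_trans (le_max_left _ _) hs'1.le) (h ▸ hs'2) hs'S
    -- c = σ₂
    have hceq : c = σ₂ := by
      rcases lt_or_eq_of_le hc2 with hlt2 | heq
      · exfalso
        by_cases hcS : (φ c u, φ c v) ∈ S
        · -- crossing point: jump down
          obtain ⟨ε, hε, hno, hdec⟩ := L2 c hcS
          have hσ₁c : σ₁ < c := by
            rcases eq_or_lt_of_le hc1 with h' | h'
            · exact absurd (h' ▸ hcS) h1
            · exact h'
          obtain ⟨s₀, hs₀1, hs₀2⟩ :=
            exists_between (show max σ₁ (c - ε) < c from max_lt hσ₁c (by linarith))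
          have hs₀lo : c - ε < s₀ := lt_of_le_of_lt (le_max_right _ _) hs₀1
          have hs₀S : (φ s₀ u, φ s₀ v) ∉ S :=
            hno s₀ (ne_of_lt hs₀2) (by rw [abs_lt]; constructor <;> linarith)
          have hs₀W : W (φ s₀ u) (φ s₀ v) ≤ W (φ σ₁ u) (φ σ₁ v) :=
            hlt s₀ (le_trans (le_max_left _ _) hs₀1.le) hs₀2 hs₀S
          set t := min (c + ε / 2) σ₂ with htdef
          have hct : c < t := lt_min (by linarith) hlt2
          have htT : t ∈ T := by
            refine ⟨⟨by linarith, min_le_right _ _⟩, fun s hs hst hsS => ?_⟩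
            rcases le_or_gt s c with hsc | hsc
            · exact hcT s hs hsc hsS
            · have hsub : s < c + ε := by
                have := min_le_left (c + ε / 2) σ₂
                have : s ≤ c + ε / 2 := le_trans hst this
                linarith
              exact le_trans (hdec s₀ s hs₀lo hs₀2 hsc hsub).le hs₀W
          exact absurd (le_csSup hbdd htT) (not_le.mpr hct)
        · -- off S: locally constant beyond c
          obtain ⟨ε, hε, hloc⟩ := L1 c hcS
          have hcW : W (φ c u) (φ c v) ≤ W (φ σ₁ u) (φ σ₁ v) :=
            hcT c hc1 (le_refl _) hcS
          set t := min (c + ε / 2) σ₂ with htdef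
          have hct : c < t := lt_min (by linarith) hlt2
          have htT : t ∈ T := by
            refine ⟨⟨by linarith, min_le_right _ _⟩, fun s hs hst hsS => ?_⟩
            rcases le_or_gt s c with hsc | hsc
            · exact hcT s hs hsc hsS
            · have hsub : |s - c| < ε := by
                have h1' := min_le_left (c + ε / 2) σ₂
                have h2' : s ≤ c + ε / 2 := le_trans hst h1'
                rw [abs_lt]; constructor <;> linarith
              rw [(hloc s hsub).2]
              exact hcW
          exact absurd (le_csSup hbdd htT) (not_le.mpr hct)
      · exact heq
    exact hcT σ₂ h12 hceq.ge h2
  refine ⟨main, ?_⟩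
  -- constancy on components
  intro σ₁ σ₂ h12 hall
  have hmaps : ∀ t ∈ Icc σ₁ σ₂, ((φ t u, φ t v) : X × X) ∈ Sᶜ := fun t ht => hall t ht
  have hcont : ContinuousOn (fun t : ℝ => W (φ t u) (φ t v)) (Icc σ₁ σ₂) :=
    hWc.comp hgc.continuousOn hmaps
  have hpc : IsPreconnected ((fun t : ℝ => W (φ t u) (φ t v)) '' Icc σ₁ σ₂) :=
    (isPreconnected_Icc).image _ hcont
  exact hpc.subsingleton (mem_image_of_mem _ ⟨le_refl _, h12⟩)
    (mem_image_of_mem _ ⟨h12, le_refl _⟩)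
end

section
/- Under the abstract axioms (A1)–(A5), let u ∈ X and w ∈ ω(u). Then for every w¹, w² in the closure of the orbit γ(w) with w¹ ≠ w², the pair (w¹, w²) does not lie in the singular set Σ. -/
/-!
Along a pair of trajectories that never meet, `W` is locally constant away from the times at
which the pair lies in `S`; these times are isolated by (A4), hence finitely many on a compact
interval, and `W` drops across each of them by (A5). So `W` is nonincreasing in time.

If distinct `w₁, w₂` in the closure of `γ(w)` formed a pair in `S`, then `W` would drop from a
value `m` before to a value `p < m` after. This drop is an open condition, so it is seen along
some pair `(φ s w, φ t w)`, and then along `(φ s u, φ t u)` each time the trajectory of `u`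
passes near `w`. Two such passes, far enough apart, give the value `p` at an earlier time and
`m` at a later time, contradicting monotonicity.
-/

open Filter Topology Set

theorem le_of_continuousOn_compl_of_eventually_le {β : Type*} [TopologicalSpace β]
    [DiscreteTopology β] [Preorder β] {f : ℝ → β} {C : Set ℝ} (hf : ContinuousOn f Cᶜ)
    (hdrop : ∀ c ∈ C, ∀ᶠ η in 𝓝[>] 0, f (c + η) ≤ f (c - η))
    {a b : ℝ} (hfin : (C ∩ Icc a b).Finite) (hab : a ≤ b) (ha : a ∉ C) (hb : b ∉ C) :
    f b ≤ f a := by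
  have hconst : ∀ a' b', a' ≤ b' → Icc a' b' ⊆ Cᶜ → f b' = f a' := fun a' b' h hC =>
    isPreconnected_Icc.constant (hf.mono hC) (right_mem_Icc.2 h) (left_mem_Icc.2 h)
  induction hn : (C ∩ Icc a b).ncard using Nat.strong_induction_on generalizing b with
  | _ n ih =>
    rcases (C ∩ Icc a b).eq_empty_or_nonempty with hempty | hne
    · exact (hconst a b hab fun σ hσ hσC => hempty.subset ⟨hσC, hσ⟩).le
    -- Split `[a, b]` just before and after its last point `c` of `C`.
    obtain ⟨c, ⟨hcC, hac, hcb⟩, hcmax⟩ := exists_max_image _ id hfin hne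
    have hac : a < c := hac.lt_of_ne (ne_of_mem_of_not_mem hcC ha).symm
    have hcb : c < b := hcb.lt_of_ne (ne_of_mem_of_not_mem hcC hb)
    have hothers : ∀ᶠ η in 𝓝 (0 : ℝ), c - η ∉ (C ∩ Icc a b) \ {c} := by
      have hc : Tendsto (fun η : ℝ => c - η) (𝓝 0) (𝓝 c) := by
        simpa using (continuous_sub_left c).tendsto 0
      exact hc.eventually (hfin.sdiff.isClosed.isOpen_compl.mem_nhds (by simp))
    obtain ⟨η, ⟨hle, hηa, hηb, hgap⟩, hη⟩ := ((hdrop c hcC).and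
      (eventually_nhdsWithin_of_eventually_nhds ((eventually_lt_nhds (sub_pos.2 hac)).and
        ((eventually_lt_nhds (sub_pos.2 hcb)).and hothers)))).and self_mem_nhdsWithin |>.exists
    have hη : 0 < η := hη
    have hleft : c - η ∉ C := fun h =>
      hgap ⟨⟨h, by linarith, by linarith⟩, by simpa using hη.ne'⟩
    have hright : f b = f (c + η) := hconst _ _ (by linarith) fun σ hσ hσC => by
      have : σ ≤ c := hcmax σ ⟨hσC, by linarith [hσ.1], hσ.2⟩
      linarith [hσ.1]
    have hsub : C ∩ Icc a (c - η) ⊆ (C ∩ Icc a b) \ {c} := fun σ ⟨hσC, hσa, hσc⟩ =>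
      ⟨⟨hσC, hσa, by linarith⟩, (by linarith : σ < c).ne⟩
    calc f b = f (c + η) := hright
      _ ≤ f (c - η) := hle
      _ ≤ f a := ih _ (hn ▸ (ncard_le_ncard hsub hfin.sdiff).trans_lt
          (ncard_sdiff_singleton_lt_of_mem ⟨hcC, hac.le, hcb.le⟩ hfin))
          (hfin.subset fun σ hσ => (hsub hσ).1) (by linarith) hleft rfl

def IsolatedSingularPairs {X : Type*} (φ : ℝ → X → X) (S : Set (X × X)) : Prop :=
  ∀ u v : X, (u, v) ∈ S → u ≠ v →
    ∃ ε > (0 : ℝ), ∀ σ : ℝ, σ ≠ 0 → |σ| < ε → (φ σ u, φ σ v) ∉ S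

def DropsAcrossSingularPairs {X : Type*} (φ : ℝ → X → X) (S : Set (X × X)) (W : X → X → ℤ) : Prop :=
  ∀ u v : X, (u, v) ∈ S → u ≠ v →
    ∃ ε > (0 : ℝ), ∀ σ σ' : ℝ, -ε < σ → σ < 0 → 0 < σ' → σ' < ε →
      W (φ σ' u) (φ σ' v) < W (φ σ u) (φ σ v)

section Flow

variable {X : Type*} {φ : ℝ → X → X} {S : Set (X × X)} {W : X → X → ℤ}

theorem flow_ne_flow_of_notMem (hφadd : ∀ σ σ' x, φ (σ + σ') x = φ σ (φ σ' x))
    (hΔS : ∀ x : X, (x, x) ∈ S) {x y : X} {a : ℝ} (ha : (φ a x, φ a y) ∉ S) (σ : ℝ) :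
    φ σ x ≠ φ σ y := fun h => ha <| by
  rw [← sub_add_cancel a σ, hφadd, hφadd, h]
  exact hΔS _

theorem finite_flow_mem_inter_Icc [TopologicalSpace X]
    (hφc : Continuous fun p : ℝ × X => φ p.1 p.2) (hφadd : ∀ σ σ' x, φ (σ + σ') x = φ σ (φ σ' x))
    (hScl : IsClosed S) (hA4 : IsolatedSingularPairs φ S) {x y : X} (hne : ∀ σ, φ σ x ≠ φ σ y)
    (a b : ℝ) :
    ({σ | (φ σ x, φ σ y) ∈ S} ∩ Icc a b).Finite := by
  have hclosed : IsClosed {σ | (φ σ x, φ σ y) ∈ S} := hScl.preimage (by fun_prop)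
  refine (isCompact_Icc.inter_left hclosed).finite (isDiscrete_iff_nhdsNE.2 fun c hc => ?_)
  obtain ⟨ε, hε, hε'⟩ := hA4 _ _ hc.1 (hne c)
  refine inf_principal_eq_bot.2 (Metric.mem_nhdsWithin_iff.2 ⟨ε, hε, fun σ ⟨hσ, hσc⟩ hσS => ?_⟩)
  refine hε' (σ - c) (sub_ne_zero.2 hσc) (by simpa [Real.dist_eq] using hσ) ?_
  rw [← hφadd, ← hφadd, sub_add_cancel]
  exact hσS.1

theorem eventually_notMem_and_W_lt (hA4 : IsolatedSingularPairs φ S)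
    (hA5 : DropsAcrossSingularPairs φ S W)
    {u v : X} (hS : (u, v) ∈ S) (hne : u ≠ v) :
    ∀ᶠ η in 𝓝[>] 0, (φ (-η) u, φ (-η) v) ∉ S ∧ (φ η u, φ η v) ∉ S ∧
      W (φ η u) (φ η v) < W (φ (-η) u) (φ (-η) v) := by
  obtain ⟨ε₄, hε₄, h₄⟩ := hA4 u v hS hne
  obtain ⟨ε₅, hε₅, h₅⟩ := hA5 u v hS hne
  filter_upwards [Ioo_mem_nhdsGT (lt_min hε₄ hε₅)] with η ⟨hη, hηε⟩
  have hη₄ : |η| < ε₄ := by rw [abs_of_pos hη]; exact hηε.trans_le (min_le_left _ _)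
  have hη₅ : η < ε₅ := hηε.trans_le (min_le_right _ _)
  exact ⟨h₄ (-η) (by simpa using hη.ne') (by rwa [abs_neg]), h₄ η hη.ne' hη₄,
    h₅ (-η) η (by linarith) (by linarith) hη hη₅⟩

theorem W_flow_le_of_le [TopologicalSpace X] (hφc : Continuous fun p : ℝ × X => φ p.1 p.2)
    (hφadd : ∀ σ σ' x, φ (σ + σ') x = φ σ (φ σ' x)) (hScl : IsClosed S)
    (hΔS : ∀ x : X, (x, x) ∈ S)
    (hWc : ContinuousOn (fun q : X × X => W q.1 q.2) Sᶜ)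
    (hA4 : IsolatedSingularPairs φ S)
    (hA5 : DropsAcrossSingularPairs φ S W)
    {x y : X} {a b : ℝ} (hab : a ≤ b) (ha : (φ a x, φ a y) ∉ S) (hb : (φ b x, φ b y) ∉ S) :
    W (φ b x) (φ b y) ≤ W (φ a x) (φ a y) := by
  have hne := flow_ne_flow_of_notMem hφadd hΔS ha
  have hcont : ContinuousOn (fun σ => W (φ σ x) (φ σ y)) {σ | (φ σ x, φ σ y) ∈ S}ᶜ :=
    hWc.comp (by fun_prop : Continuous fun σ => (φ σ x, φ σ y)).continuousOn fun _ h => h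
  refine le_of_continuousOn_compl_of_eventually_le hcont (fun c hc => ?_)
    (finite_flow_mem_inter_Icc hφc hφadd hScl hA4 hne a b) hab ha hb
  filter_upwards [eventually_notMem_and_W_lt hA4 hA5 hc (hne c)] with η hη
  have hlt := hη.2.2
  simp only [← hφadd, ← sub_eq_neg_add, add_comm η c] at hlt
  exact hlt.le

end Flow

theorem stmt_6_general {X : Type*} [TopologicalSpace X]
    (φ : ℝ → X → X)
    (hφc : Continuous fun p : ℝ × X => φ p.1 p.2)
    (hφadd : ∀ σ σ' x, φ (σ + σ') x = φ σ (φ σ' x))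
    (S : Set (X × X)) (hScl : IsClosed S)
    (hΔS : ∀ x : X, (x, x) ∈ S)
    (W : X → X → ℤ)
    -- (A1)
    (hWc : ContinuousOn (fun q : X × X => W q.1 q.2) Sᶜ)
    -- (A4)
    (hA4 : ∀ u v : X, (u, v) ∈ S → u ≠ v →
      ∃ ε > (0 : ℝ), ∀ σ : ℝ, σ ≠ 0 → |σ| < ε → (φ σ u, φ σ v) ∉ S)
    -- (A5)
    (hA5 : ∀ u v : X, (u, v) ∈ S → u ≠ v →
      ∃ ε > (0 : ℝ), ∀ σ σ' : ℝ, -ε < σ → σ < 0 → 0 < σ' → σ' < ε →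
        W (φ σ' u) (φ σ' v) < W (φ σ u) (φ σ v))
    (u w : X)
    (hw : ∃ σs : ℕ → ℝ, Tendsto σs atTop atTop ∧
      Tendsto (fun n => φ (σs n) u) atTop (nhds w)) :
    ∀ w₁ ∈ closure {x : X | ∃ σ : ℝ, x = φ σ w},
    ∀ w₂ ∈ closure {x : X | ∃ σ : ℝ, x = φ σ w},
      w₁ ≠ w₂ → (w₁, w₂) ∉ S := by
  intro w₁ hw₁ w₂ hw₂ hne hS
  obtain ⟨δ, ⟨hm, hp, hlt⟩, hδ⟩ :=
    ((eventually_notMem_and_W_lt hA4 hA5 hS hne).and self_mem_nhdsWithin).exists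
  set U : ℤ → Set (X × X) := fun k => Sᶜ ∩ {q | W q.1 q.2 = k}
  have hU : ∀ k, IsOpen (U k) := fun k =>
    hWc.isOpen_inter_preimage hScl.isOpen_compl (isOpen_discrete {k})
  set V : Set (X × X) := {q | (φ (-δ) q.1, φ (-δ) q.2) ∈ U (W (φ (-δ) w₁) (φ (-δ) w₂)) ∧
    (φ δ q.1, φ δ q.2) ∈ U (W (φ δ w₁) (φ δ w₂))}
  have hV : IsOpen V := ((hU _).preimage (by fun_prop)).inter ((hU _).preimage (by fun_prop))
  have hclosure :
      (w₁, w₂) ∈ closure ({x : X | ∃ σ : ℝ, x = φ σ w} ×ˢ {x | ∃ σ : ℝ, x = φ σ w}) :=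
    closure_prod_eq (X := X) (Y := X) ▸ mk_mem_prod hw₁ hw₂
  have hwV : (w₁, w₂) ∈ V := ⟨⟨hm, rfl⟩, ⟨hp, rfl⟩⟩
  obtain ⟨⟨_, _⟩, hqV, ⟨s, rfl⟩, ⟨t, rfl⟩⟩ := mem_closure_iff.1 hclosure V hV hwV
  set O : Set X := {z | (φ s z, φ t z) ∈ V}
  have hO : IsOpen O := hV.preimage (by fun_prop)
  obtain ⟨σs, hσs, hσsw⟩ := hw
  have hfreq : ∃ᶠ σ in atTop, φ σ u ∈ O :=
    hσs.frequently (hσsw.eventually (hO.mem_nhds hqV)).frequently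
  obtain ⟨σ₀, hσ₀⟩ := hfreq.exists
  obtain ⟨σ₁, hσ₁, hσ₀₁⟩ := (hfreq.and_eventually (eventually_ge_atTop (σ₀ + 2 * δ))).exists
  have hshift : ∀ r r' σ, φ r (φ r' (φ σ u)) = φ (σ + r) (φ r' u) := fun r r' σ => by
    simp only [← hφadd]; congr 1; ring
  obtain ⟨-, ⟨ha, hWa⟩⟩ := hσ₀
  obtain ⟨⟨hb, hWb⟩, -⟩ := hσ₁
  rw [hshift, hshift] at ha hWa hb hWb
  have := W_flow_le_of_le hφc hφadd hScl hΔS hWc hA4 hA5 (by linarith) ha hb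
  simp only [mem_ofPred_eq] at hWa hWb
  omega

/-- under axioms (A1)–(A5), if w ∈ ω(u), then no two distinct
points of the closure of the orbit γ(w) form a singular pair (a pair in Σ). -/
theorem stmt_6 {X : Type*} [TopologicalSpace X] [CompactSpace X] [T2Space X]
    (φ : ℝ → X → X)
    (hφc : Continuous fun p : ℝ × X => φ p.1 p.2)
    (hφ0 : ∀ x, φ 0 x = x)
    (hφadd : ∀ σ σ' x, φ (σ + σ') x = φ σ (φ σ' x))
    (S : Set (X × X)) (hScl : IsClosed S)
    (hΔS : ∀ x : X, (x, x) ∈ S)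
    (W : X → X → ℤ)
    -- (A1)
    (hWc : ContinuousOn (fun q : X × X => W q.1 q.2) Sᶜ)
    (hWsym : ∀ u v : X, (u, v) ∉ S → W u v = W v u)
    -- (A2), (A3)
    (π : X → ℝ × ℝ) (hπc : Continuous π)
    (hA3 : ∀ u v : X, π u = π v → (u, v) ∈ S)
    -- (A4)
    (hA4 : ∀ u v : X, (u, v) ∈ S → u ≠ v →
      ∃ ε > (0 : ℝ), ∀ σ : ℝ, σ ≠ 0 → |σ| < ε → (φ σ u, φ σ v) ∉ S)
    -- (A5)
    (hA5 : ∀ u v : X, (u, v) ∈ S → u ≠ v →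
      ∃ ε > (0 : ℝ), ∀ σ σ' : ℝ, -ε < σ → σ < 0 → 0 < σ' → σ' < ε →
        W (φ σ' u) (φ σ' v) < W (φ σ u) (φ σ v))
    (u w : X)
    (hw : ∃ σs : ℕ → ℝ, Tendsto σs atTop atTop ∧
      Tendsto (fun n => φ (σs n) u) atTop (nhds w)) :
    ∀ w₁ ∈ closure {x : X | ∃ σ : ℝ, x = φ σ w},
    ∀ w₂ ∈ closure {x : X | ∃ σ : ℝ, x = φ σ w},
      w₁ ≠ w₂ → (w₁, w₂) ∉ S :=
  stmt_6_general φ hφc hφadd S hScl hΔS W hWc hA4 hA5 u w hw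
end

section
/- Under the abstract axioms (A1)–(A5), let u ∈ X and w ∈ ω(u). Then the projection π restricted to the closure of γ(w) is a homeomorphism onto its image π(cl(γ(w))) ⊆ ℝ². -/
open Filter Topology Set

private lemma flow_cont {X : Type*} [TopologicalSpace X]
    {φ : ℝ → X → X} (hφc : Continuous fun p : ℝ × X => φ p.1 p.2) (v : X) :
    Continuous fun τ : ℝ => φ τ v :=
  hφc.comp (continuous_id.prodMk continuous_const)

private lemma flow_cont' {X : Type*} [TopologicalSpace X]
    {φ : ℝ → X → X} (hφc : Continuous fun p : ℝ × X => φ p.1 p.2) (σ : ℝ) :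
    Continuous fun v : X => φ σ v :=
  hφc.comp (continuous_const.prodMk continuous_id)

/-- The set of crossing times of `S` along a pair trajectory that avoids the
diagonal is finite on any compact interval. -/
private lemma crossings_finite {X : Type*} [TopologicalSpace X]
    {φ : ℝ → X → X} (hφc : Continuous fun p : ℝ × X => φ p.1 p.2)
    (hφadd : ∀ σ σ' x, φ (σ + σ') x = φ σ (φ σ' x))
    {S : Set (X × X)} (hScl : IsClosed S)
    (hA4 : ∀ u v : X, (u, v) ∈ S → u ≠ v →
      ∃ ε > (0 : ℝ), ∀ σ : ℝ, σ ≠ 0 → |σ| < ε → (φ σ u, φ σ v) ∉ S)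
    (v₁ v₂ : X) (hΔ : ∀ t : ℝ, φ t v₁ ≠ φ t v₂) (s t : ℝ) :
    {τ : ℝ | τ ∈ Icc s t ∧ (φ τ v₁, φ τ v₂) ∈ S}.Finite := by
  set Z := {τ : ℝ | τ ∈ Icc s t ∧ (φ τ v₁, φ τ v₂) ∈ S} with hZdef
  have hpairc : Continuous fun τ : ℝ => (φ τ v₁, φ τ v₂) :=
    (flow_cont hφc v₁).prodMk (flow_cont hφc v₂)
  have hZcpt : IsCompact Z := by
    have hzeq : Z = Icc s t ∩ (fun τ : ℝ => (φ τ v₁, φ τ v₂)) ⁻¹' S := rfl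
    rw [hzeq]
    exact isCompact_Icc.inter_right (hScl.preimage hpairc)
  have hchoice : ∀ z : Z, ∃ ε > (0:ℝ), ∀ σ : ℝ, σ ≠ 0 → |σ| < ε →
      (φ σ (φ z.1 v₁), φ σ (φ z.1 v₂)) ∉ S :=
    fun z => hA4 _ _ z.2.2 (hΔ z.1)
  choose ε hεpos hεprop using hchoice
  obtain ⟨F, hF⟩ := hZcpt.elim_finite_subcover
    (fun z : Z => Ioo (z.1 - ε z) (z.1 + ε z)) (fun z => isOpen_Ioo)
    (fun τ hτ => mem_iUnion.2 ⟨⟨τ, hτ⟩,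
      ⟨by have := hεpos ⟨τ, hτ⟩; simpa using by linarith,
       by have := hεpos ⟨τ, hτ⟩; simpa using by linarith⟩⟩)
  refine Set.Finite.subset (F.finite_toSet.image Subtype.val) ?_
  intro τ hτ
  obtain ⟨z, hzF, hτIoo⟩ := Set.mem_iUnion₂.mp (hF hτ)
  have hτz : τ = z.1 := by
    by_contra hne
    have hσne : τ - z.1 ≠ 0 := sub_ne_zero.2 hne
    have habs : |τ - z.1| < ε z :=
      abs_lt.2 ⟨by linarith [hτIoo.1], by linarith [hτIoo.2]⟩
    have hout := hεprop z (τ - z.1) hσne habs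
    apply hout
    have e1 : φ (τ - z.1) (φ z.1 v₁) = φ τ v₁ := by
      rw [← hφadd]; congr 1; ring
    have e2 : φ (τ - z.1) (φ z.1 v₂) = φ τ v₂ := by
      rw [← hφadd]; congr 1; ring
    rw [e1, e2]
    exact hτ.2
  exact ⟨z, hzF, hτz.symm⟩

/-- `W` is nonincreasing along a pair trajectory that avoids the diagonal. -/
private lemma W_mono {X : Type*} [TopologicalSpace X]
    {φ : ℝ → X → X} (hφc : Continuous fun p : ℝ × X => φ p.1 p.2)
    (hφadd : ∀ σ σ' x, φ (σ + σ') x = φ σ (φ σ' x))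
    {S : Set (X × X)} (hScl : IsClosed S)
    {W : X → X → ℤ}
    (hWc : ContinuousOn (fun q : X × X => W q.1 q.2) Sᶜ)
    (hA4 : ∀ u v : X, (u, v) ∈ S → u ≠ v →
      ∃ ε > (0 : ℝ), ∀ σ : ℝ, σ ≠ 0 → |σ| < ε → (φ σ u, φ σ v) ∉ S)
    (hA5 : ∀ u v : X, (u, v) ∈ S → u ≠ v →
      ∃ ε > (0 : ℝ), ∀ σ σ' : ℝ, -ε < σ → σ < 0 → 0 < σ' → σ' < ε →
        W (φ σ' u) (φ σ' v) < W (φ σ u) (φ σ v))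
    (v₁ v₂ : X) (hΔ : ∀ t : ℝ, φ t v₁ ≠ φ t v₂) :
    ∀ s t : ℝ, s ≤ t → (φ s v₁, φ s v₂) ∉ S → (φ t v₁, φ t v₂) ∉ S →
      W (φ t v₁) (φ t v₂) ≤ W (φ s v₁) (φ s v₂) := by
  have hpairc : Continuous fun τ : ℝ => (φ τ v₁, φ τ v₂) :=
    (flow_cont hφc v₁).prodMk (flow_cont hφc v₂)
  -- constancy of W on S-free intervals
  have hconst : ∀ s t : ℝ, s ≤ t → (∀ τ ∈ Icc s t, (φ τ v₁, φ τ v₂) ∉ S) →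
      W (φ t v₁) (φ t v₂) = W (φ s v₁) (φ s v₂) := by
    intro s t hst hfree
    have hcont : ContinuousOn (fun τ : ℝ => W (φ τ v₁) (φ τ v₂)) (Icc s t) :=
      hWc.comp hpairc.continuousOn (fun τ hτ => hfree τ hτ)
    have himg := (isPreconnected_Icc (a := s) (b := t)).image _ hcont
    exact himg.subsingleton
      (mem_image_of_mem _ (right_mem_Icc.2 hst))
      (mem_image_of_mem _ (left_mem_Icc.2 hst))
  suffices H : ∀ n : ℕ, ∀ s t : ℝ, s ≤ t →
      (φ s v₁, φ s v₂) ∉ S → (φ t v₁, φ t v₂) ∉ S →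
      {τ : ℝ | τ ∈ Icc s t ∧ (φ τ v₁, φ τ v₂) ∈ S}.ncard ≤ n →
      W (φ t v₁) (φ t v₂) ≤ W (φ s v₁) (φ s v₂) by
    intro s t hst hs ht
    exact H _ s t hst hs ht le_rfl
  intro n
  induction n with
  | zero =>
    intro s t hst hs ht hcard
    have hfin := crossings_finite hφc hφadd hScl hA4 v₁ v₂ hΔ s t
    have hempty : {τ : ℝ | τ ∈ Icc s t ∧ (φ τ v₁, φ τ v₂) ∈ S} = ∅ :=
      (Set.ncard_eq_zero hfin).mp (Nat.le_zero.mp hcard)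
    refine le_of_eq (hconst s t hst ?_)
    intro τ hτ hSmem
    have hmem : τ ∈ {τ : ℝ | τ ∈ Icc s t ∧ (φ τ v₁, φ τ v₂) ∈ S} := ⟨hτ, hSmem⟩
    rw [hempty] at hmem
    exact hmem
  | succ n ih =>
    intro s t hst hs ht hcard
    by_cases hne : {τ : ℝ | τ ∈ Icc s t ∧ (φ τ v₁, φ τ v₂) ∈ S}.Nonempty
    · obtain ⟨τ, hτIcc, hτS⟩ := hne
      have hsτ : s < τ := lt_of_le_of_ne hτIcc.1 (fun h => hs (by rw [h]; exact hτS))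
      have hτt : τ < t := lt_of_le_of_ne hτIcc.2 (fun h => ht (by rw [← h]; exact hτS))
      obtain ⟨ε₄, hε₄, h₄⟩ := hA4 _ _ hτS (hΔ τ)
      obtain ⟨ε₅, hε₅, h₅⟩ := hA5 _ _ hτS (hΔ τ)
      obtain ⟨δ, hδpos, hδε₄, hδε₅, hδs, hδt⟩ :
          ∃ δ : ℝ, 0 < δ ∧ δ < ε₄ ∧ δ < ε₅ ∧ s ≤ τ - δ ∧ τ + δ ≤ t := by
        refine ⟨min (min ε₄ ε₅ / 2) (min ((τ - s)/2) ((t - τ)/2)), ?_, ?_, ?_, ?_, ?_⟩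
        · have h1 : 0 < min ε₄ ε₅ / 2 := by
            have := lt_min hε₄ hε₅; linarith
          have h2 : 0 < min ((τ - s)/2) ((t - τ)/2) :=
            lt_min (by linarith) (by linarith)
          exact lt_min h1 h2
        · have h1 := min_le_left (min ε₄ ε₅ / 2) (min ((τ - s)/2) ((t - τ)/2))
          have h2 := min_le_left ε₄ ε₅
          have := lt_min hε₄ hε₅
          linarith
        · have h1 := min_le_left (min ε₄ ε₅ / 2) (min ((τ - s)/2) ((t - τ)/2))
          have h2 := min_le_right ε₄ ε₅
          have := lt_min hε₄ hε₅
          linarith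
        · have h1 := min_le_right (min ε₄ ε₅ / 2) (min ((τ - s)/2) ((t - τ)/2))
          have h2 := min_le_left ((τ - s)/2) ((t - τ)/2)
          linarith
        · have h1 := min_le_right (min ε₄ ε₅ / 2) (min ((τ - s)/2) ((t - τ)/2))
          have h2 := min_le_right ((τ - s)/2) ((t - τ)/2)
          linarith
      have hoff : ∀ σ : ℝ, σ ≠ 0 → |σ| < ε₄ →
          (φ (τ + σ) v₁, φ (τ + σ) v₂) ∉ S := by
        intro σ hσ hσlt
        have hth := h₄ σ hσ hσlt
        have e1 : φ σ (φ τ v₁) = φ (τ + σ) v₁ := by rw [← hφadd]; congr 1; ring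
        have e2 : φ σ (φ τ v₂) = φ (τ + σ) v₂ := by rw [← hφadd]; congr 1; ring
        rwa [e1, e2] at hth
      have hoffm : (φ (τ - δ) v₁, φ (τ - δ) v₂) ∉ S := by
        have hth := hoff (-δ) (neg_ne_zero.2 hδpos.ne')
          (by rw [abs_neg, abs_of_pos hδpos]; exact hδε₄)
        rwa [show τ + -δ = τ - δ by ring] at hth
      have hoffp : (φ (τ + δ) v₁, φ (τ + δ) v₂) ∉ S :=
        hoff δ hδpos.ne' (by rw [abs_of_pos hδpos]; exact hδε₄)
      have hdrop : W (φ (τ + δ) v₁) (φ (τ + δ) v₂) < W (φ (τ - δ) v₁) (φ (τ - δ) v₂) := by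
        have hth := h₅ (-δ) δ (by linarith) (by linarith) hδpos hδε₅
        have e1 : φ δ (φ τ v₁) = φ (τ + δ) v₁ := by rw [← hφadd]; congr 1; ring
        have e2 : φ δ (φ τ v₂) = φ (τ + δ) v₂ := by rw [← hφadd]; congr 1; ring
        have e3 : φ (-δ) (φ τ v₁) = φ (τ - δ) v₁ := by rw [← hφadd]; congr 1; ring
        have e4 : φ (-δ) (φ τ v₂) = φ (τ - δ) v₂ := by rw [← hφadd]; congr 1; ring
        rwa [e1, e2, e3, e4] at hth
      have hfin := crossings_finite hφc hφadd hScl hA4 v₁ v₂ hΔ s t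
      have hτZ : τ ∈ {τ : ℝ | τ ∈ Icc s t ∧ (φ τ v₁, φ τ v₂) ∈ S} := ⟨hτIcc, hτS⟩
      have hdiffcard : ({τ : ℝ | τ ∈ Icc s t ∧ (φ τ v₁, φ τ v₂) ∈ S} \ {τ}).ncard < 
          {τ : ℝ | τ ∈ Icc s t ∧ (φ τ v₁, φ τ v₂) ∈ S}.ncard :=
        Set.ncard_diff_singleton_lt_of_mem hτZ hfin
      have hfindiff : ({τ : ℝ | τ ∈ Icc s t ∧ (φ τ v₁, φ τ v₂) ∈ S} \ {τ}).Finite :=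
        hfin.subset Set.diff_subset
      have hsub1 : {τ' : ℝ | τ' ∈ Icc s (τ - δ) ∧ (φ τ' v₁, φ τ' v₂) ∈ S} ⊆
          {τ : ℝ | τ ∈ Icc s t ∧ (φ τ v₁, φ τ v₂) ∈ S} \ {τ} := by
        intro σ hσ
        refine ⟨⟨⟨hσ.1.1, le_trans hσ.1.2 (by linarith)⟩, hσ.2⟩, ?_⟩
        simp only [mem_singleton_iff]
        intro h
        have := hσ.1.2
        rw [h] at this
        linarith
      have hsub2 : {τ' : ℝ | τ' ∈ Icc (τ + δ) t ∧ (φ τ' v₁, φ τ' v₂) ∈ S} ⊆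
          {τ : ℝ | τ ∈ Icc s t ∧ (φ τ v₁, φ τ v₂) ∈ S} \ {τ} := by
        intro σ hσ
        refine ⟨⟨⟨le_trans (by linarith) hσ.1.1, hσ.1.2⟩, hσ.2⟩, ?_⟩
        simp only [mem_singleton_iff]
        intro h
        have := hσ.1.1
        rw [h] at this
        linarith
      have hcard1 : {τ' : ℝ | τ' ∈ Icc s (τ - δ) ∧ (φ τ' v₁, φ τ' v₂) ∈ S}.ncard ≤ n := by
        have := Set.ncard_le_ncard hsub1 hfindiff
        omega
      have hcard2 : {τ' : ℝ | τ' ∈ Icc (τ + δ) t ∧ (φ τ' v₁, φ τ' v₂) ∈ S}.ncard ≤ n := by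
        have := Set.ncard_le_ncard hsub2 hfindiff
        omega
      have ih1 := ih s (τ - δ) hδs hs hoffm hcard1
      have ih2 := ih (τ + δ) t hδt hoffp ht hcard2
      omega
    · refine le_of_eq (hconst s t hst ?_)
      intro τ hτ hSmem
      exact hne ⟨τ, hτ, hSmem⟩

/-- under axioms (A1)–(A5), for w ∈ ω(u) the projection π
restricted to the closure of the orbit γ(w) is a homeomorphism onto its
image in ℝ². -/
theorem stmt_7 {X : Type*} [TopologicalSpace X] [CompactSpace X] [T2Space X]
    (φ : ℝ → X → X)
    (hφc : Continuous fun p : ℝ × X => φ p.1 p.2)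
    (hφ0 : ∀ x, φ 0 x = x)
    (hφadd : ∀ σ σ' x, φ (σ + σ') x = φ σ (φ σ' x))
    (S : Set (X × X)) (hScl : IsClosed S)
    (hΔS : ∀ x : X, (x, x) ∈ S)
    (W : X → X → ℤ)
    -- (A1)
    (hWc : ContinuousOn (fun q : X × X => W q.1 q.2) Sᶜ)
    (hWsym : ∀ u v : X, (u, v) ∉ S → W u v = W v u)
    -- (A2), (A3)
    (π : X → ℝ × ℝ) (hπc : Continuous π)
    (hA3 : ∀ u v : X, π u = π v → (u, v) ∈ S)
    -- (A4)
    (hA4 : ∀ u v : X, (u, v) ∈ S → u ≠ v →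
      ∃ ε > (0 : ℝ), ∀ σ : ℝ, σ ≠ 0 → |σ| < ε → (φ σ u, φ σ v) ∉ S)
    -- (A5)
    (hA5 : ∀ u v : X, (u, v) ∈ S → u ≠ v →
      ∃ ε > (0 : ℝ), ∀ σ σ' : ℝ, -ε < σ → σ < 0 → 0 < σ' → σ' < ε →
        W (φ σ' u) (φ σ' v) < W (φ σ u) (φ σ v))
    (u w : X)
    (hw : ∃ σs : ℕ → ℝ, Tendsto σs atTop atTop ∧
      Tendsto (fun n => φ (σs n) u) atTop (nhds w)) :
    ∃ e : closure {x : X | ∃ σ : ℝ, x = φ σ w} ≃ₜ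
        (π '' closure {x : X | ∃ σ : ℝ, x = φ σ w}),
      ∀ x, (e x : ℝ × ℝ) = π (x : X) := by
  classical
  obtain ⟨σs, hσtop, hσw⟩ := hw
  have hφcont : ∀ σ : ℝ, Continuous fun v : X => φ σ v := fun σ => flow_cont' hφc σ
  -- KEY: no two distinct points of the closure of the orbit of w form a pair in S
  have key : ∀ x ∈ closure {x : X | ∃ σ : ℝ, x = φ σ w},
      ∀ y ∈ closure {x : X | ∃ σ : ℝ, x = φ σ w}, x ≠ y → (x, y) ∉ S := by
    intro x hx y hy hxy hS
    obtain ⟨ε₄, hε₄, h₄⟩ := hA4 x y hS hxy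
    obtain ⟨ε₅, hε₅, h₅⟩ := hA5 x y hS hxy
    obtain ⟨σ₀, hσ₀pos, hσ₀ε₄, hσ₀ε₅⟩ : ∃ σ₀ : ℝ, 0 < σ₀ ∧ σ₀ < ε₄ ∧ σ₀ < ε₅ := by
      refine ⟨min ε₄ ε₅ / 2, ?_, ?_, ?_⟩ <;>
        · have h1 := lt_min hε₄ hε₅
          have h2 := min_le_left ε₄ ε₅
          have h3 := min_le_right ε₄ ε₅
          linarith
    have hm : (φ (-σ₀) x, φ (-σ₀) y) ∉ S :=
      h₄ (-σ₀) (neg_ne_zero.2 hσ₀pos.ne')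
        (by rw [abs_neg, abs_of_pos hσ₀pos]; exact hσ₀ε₄)
    have hp : (φ σ₀ x, φ σ₀ y) ∉ S :=
      h₄ σ₀ hσ₀pos.ne' (by rw [abs_of_pos hσ₀pos]; exact hσ₀ε₄)
    have hqp : W (φ σ₀ x) (φ σ₀ y) < W (φ (-σ₀) x) (φ (-σ₀) y) :=
      h₅ (-σ₀) σ₀ (by linarith) (by linarith) hσ₀pos hσ₀ε₅
    -- the eventual properties around (x,y)
    have hFmc : Continuous fun z : X × X => (φ (-σ₀) z.1, φ (-σ₀) z.2) :=
      ((hφcont (-σ₀)).comp continuous_fst).prodMk ((hφcont (-σ₀)).comp continuous_snd)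
    have hFpc : Continuous fun z : X × X => (φ σ₀ z.1, φ σ₀ z.2) :=
      ((hφcont σ₀).comp continuous_fst).prodMk ((hφcont σ₀).comp continuous_snd)
    have e1 : ∀ᶠ z : X × X in 𝓝 (x, y), (φ (-σ₀) z.1, φ (-σ₀) z.2) ∉ S := by
      have hca : ContinuousAt (fun z : X × X => (φ (-σ₀) z.1, φ (-σ₀) z.2)) (x, y) :=
        hFmc.continuousAt
      exact hca (hScl.isOpen_compl.mem_nhds hm)
    have e3 : ∀ᶠ z : X × X in 𝓝 (x, y), (φ σ₀ z.1, φ σ₀ z.2) ∉ S := by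
      have hca : ContinuousAt (fun z : X × X => (φ σ₀ z.1, φ σ₀ z.2)) (x, y) :=
        hFpc.continuousAt
      exact hca (hScl.isOpen_compl.mem_nhds hp)
    have e2 : ∀ᶠ z : X × X in 𝓝 (x, y),
        W (φ (-σ₀) z.1) (φ (-σ₀) z.2) = W (φ (-σ₀) x) (φ (-σ₀) y) := by
      have hca0 : ContinuousAt (fun q : X × X => W q.1 q.2) (φ (-σ₀) x, φ (-σ₀) y) :=
        hWc.continuousAt (hScl.isOpen_compl.mem_nhds hm)
      have hcaf : ContinuousAt (fun z : X × X => (φ (-σ₀) z.1, φ (-σ₀) z.2)) (x, y) :=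
        hFmc.continuousAt
      have hca : ContinuousAt (fun z : X × X => W (φ (-σ₀) z.1) (φ (-σ₀) z.2)) (x, y) :=
        Filter.Tendsto.comp hca0 hcaf
      exact hca ((isOpen_discrete {W (φ (-σ₀) x) (φ (-σ₀) y)}).mem_nhds rfl)
    have e4 : ∀ᶠ z : X × X in 𝓝 (x, y),
        W (φ σ₀ z.1) (φ σ₀ z.2) = W (φ σ₀ x) (φ σ₀ y) := by
      have hca0 : ContinuousAt (fun q : X × X => W q.1 q.2) (φ σ₀ x, φ σ₀ y) :=
        hWc.continuousAt (hScl.isOpen_compl.mem_nhds hp)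
      have hcaf : ContinuousAt (fun z : X × X => (φ σ₀ z.1, φ σ₀ z.2)) (x, y) :=
        hFpc.continuousAt
      have hca : ContinuousAt (fun z : X × X => W (φ σ₀ z.1) (φ σ₀ z.2)) (x, y) :=
        Filter.Tendsto.comp hca0 hcaf
      exact hca ((isOpen_discrete {W (φ σ₀ x) (φ σ₀ y)}).mem_nhds rfl)
    have hev := (e1.and e2).and (e3.and e4)
    obtain ⟨O, hOprop, hOopen, hOxy⟩ := eventually_nhds_iff.mp hev
    obtain ⟨U', V', hU'o, hV'o, hxU', hyV', hUV'⟩ := t2_separation hxy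
    obtain ⟨U, V, hUo, hVo, hxU, hyV, hUVO⟩ := isOpen_prod_iff.mp hOopen x y hOxy
    -- pick times a b with φ a w near x, φ b w near y
    obtain ⟨_, ⟨hxaU, hxaU'⟩, a, rfl⟩ :=
      mem_closure_iff.mp hx (U ∩ U') (hUo.inter hU'o) ⟨hxU, hxU'⟩
    obtain ⟨_, ⟨hybV, hybV'⟩, b, rfl⟩ :=
      mem_closure_iff.mp hy (V ∩ V') (hVo.inter hV'o) ⟨hyV, hyV'⟩
    -- the trajectory pair (φ (t + a - b) u, φ t u) never hits the diagonal
    have hnever : ∀ t : ℝ, φ t (φ (a - b) u) ≠ φ t u := by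
      intro t heq
      have hshift : ∀ r : ℝ, φ (r + (a - b)) u = φ r u := by
        intro r
        have h1 : φ (t + (a - b)) u = φ t u := by rw [hφadd]; exact heq
        calc φ (r + (a - b)) u = φ ((r - t) + (t + (a - b))) u := by congr 1; ring
          _ = φ (r - t) (φ (t + (a - b)) u) := hφadd _ _ _
          _ = φ (r - t) (φ t u) := by rw [h1]
          _ = φ ((r - t) + t) u := (hφadd _ _ _).symm
          _ = φ r u := by congr 1; ring
      have hcw : φ (a - b) w = w := by
        have l1 : Tendsto (fun n => φ (a - b) (φ (σs n) u)) atTop (𝓝 (φ (a - b) w)) :=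
          ((hφcont (a - b)).tendsto w).comp hσw
        have l2 : (fun n => φ (a - b) (φ (σs n) u)) = fun n => φ (σs n) u := by
          funext n
          rw [← hφadd, add_comm, hshift]
        rw [l2] at l1
        exact tendsto_nhds_unique l1 hσw
      have hab : φ a w = φ b w := by
        calc φ a w = φ (b + (a - b)) w := by congr 1; ring
          _ = φ b (φ (a - b) w) := hφadd _ _ _
          _ = φ b w := by rw [hcw]
      exact Set.disjoint_left.mp hUV' (hab ▸ hxaU') hybV'
    -- transport the drop to the trajectory of u at arbitrarily late times
    have hconv : Tendsto (fun n => (φ (a + σs n) u, φ (b + σs n) u)) atTop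
        (𝓝 (φ a w, φ b w)) := by
      have l1 : Tendsto (fun n => φ a (φ (σs n) u)) atTop (𝓝 (φ a w)) :=
        ((hφcont a).tendsto w).comp hσw
      have l2 : Tendsto (fun n => φ b (φ (σs n) u)) atTop (𝓝 (φ b w)) :=
        ((hφcont b).tendsto w).comp hσw
      have hpm := l1.prodMk_nhds l2
      simp only [← hφadd] at hpm
      exact hpm
    have hOmem : (φ a w, φ b w) ∈ O := hUVO ⟨hxaU, hybV⟩
    have hOev : ∀ᶠ n in atTop, (φ (a + σs n) u, φ (b + σs n) u) ∈ O :=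
      hconv (hOopen.mem_nhds hOmem)
    obtain ⟨N, hN⟩ := eventually_atTop.mp hOev
    have hprop : ∀ n, N ≤ n →
        ((φ (-σ₀ + (a + σs n)) u, φ (-σ₀ + (b + σs n)) u) ∉ S ∧
          W (φ (-σ₀ + (a + σs n)) u) (φ (-σ₀ + (b + σs n)) u) = W (φ (-σ₀) x) (φ (-σ₀) y)) ∧
        ((φ (σ₀ + (a + σs n)) u, φ (σ₀ + (b + σs n)) u) ∉ S ∧
          W (φ (σ₀ + (a + σs n)) u) (φ (σ₀ + (b + σs n)) u) = W (φ σ₀ x) (φ σ₀ y)) := by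
      intro n hn
      have hth := hOprop _ (hN n hn)
      simp only [← hφadd] at hth
      exact hth
    obtain ⟨n₁, hn₁N, hn₁big⟩ : ∃ n₁, N ≤ n₁ ∧ σs N + 2 * σ₀ ≤ σs n₁ := by
      obtain ⟨n₁, h1, h2⟩ :=
        ((hσtop.eventually_ge_atTop (σs N + 2 * σ₀)).and (eventually_ge_atTop N)).exists
      exact ⟨n₁, h2, h1⟩
    obtain ⟨-, hS₀, hW₀⟩ := hprop N le_rfl
    obtain ⟨⟨hS₁, hW₁⟩, -⟩ := hprop n₁ hn₁N
    -- apply monotonicity of W along the pair trajectory of (φ (a-b) u, u)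
    have e_s : φ (σ₀ + (b + σs N)) (φ (a - b) u) = φ (σ₀ + (a + σs N)) u := by
      rw [← hφadd]; congr 1; ring
    have e_t : φ (-σ₀ + (b + σs n₁)) (φ (a - b) u) = φ (-σ₀ + (a + σs n₁)) u := by
      rw [← hφadd]; congr 1; ring
    have hmono := W_mono hφc hφadd hScl hWc hA4 hA5 (φ (a - b) u) u hnever
      (σ₀ + (b + σs N)) (-σ₀ + (b + σs n₁)) (by linarith)
      (by rw [e_s]; exact hS₀) (by rw [e_t]; exact hS₁)
    rw [e_s, e_t, hW₀, hW₁] at hmono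
    omega
  -- injectivity of π on the closure of the orbit
  have hinj : ∀ x ∈ closure {x : X | ∃ σ : ℝ, x = φ σ w},
      ∀ y ∈ closure {x : X | ∃ σ : ℝ, x = φ σ w}, π x = π y → x = y := by
    intro x hx y hy hπxy
    by_contra hxy
    exact key x hx y hy hxy (hA3 x y hπxy)
  -- build the homeomorphism
  haveI : CompactSpace (closure {x : X | ∃ σ : ℝ, x = φ σ w}) :=
    isCompact_iff_compactSpace.mp isClosed_closure.isCompact
  let f : closure {x : X | ∃ σ : ℝ, x = φ σ w} →
      ↥(π '' closure {x : X | ∃ σ : ℝ, x = φ σ w}) :=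
    fun x => ⟨π x, ⟨x.1, x.2, rfl⟩⟩
  have hbij : Function.Bijective f := by
    constructor
    · intro p q hpq
      exact Subtype.ext (hinj p.1 p.2 q.1 q.2 (congrArg Subtype.val hpq))
    · rintro ⟨y, x, hx, rfl⟩
      exact ⟨⟨x, hx⟩, rfl⟩
  have hcont : Continuous f :=
    Continuous.subtype_mk (hπc.comp continuous_subtype_val) _
  exact ⟨Continuous.homeoOfEquivCompactToT2 (f := Equiv.ofBijective f hbij) hcont,
    fun x => rfl⟩
end

section
/- Under the abstract axioms (A1)–(A5), let u ∈ X and w ∈ ω(u). Then there exists an integer k(w) such that W(w¹, w²) = k(w) for all w¹, w² ∈ cl(γ(w)) with w¹ ≠ w². -/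
/-!
Along a pair trajectory `t ↦ (ϕ t x, ϕ t y)` the integer `W` is locally constant off `S` and drops
strictly at each (isolated) crossing of `S`, so it is nonincreasing. Hence a pair `(a, b) ∈ S` with
`a ≠ b` has a neighbourhood that no pair trajectory visits at arbitrarily late times: an early
visit pins `W` just after the crossing, a later one forces the strictly larger value just before
it. Pairs of orbit points of an ω-limit point `w` are late-visited by pair trajectories of `u`, so
distinct points of the orbit closure of `w` are never in `S`. Then `τ ↦ W w (ϕ τ w)` is locally
constant off the closed group of periods of `w`, periodic and even; subtracting the largest period
below `τ > 0` moves `τ` into a period-free interval `(0, r]`, and these intervals are connected.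
-/

open Filter Topology Set

theorem ContinuousOn.eventually_mem_and_eq {Y β : Type*} [TopologicalSpace Y] [TopologicalSpace β]
    [DiscreteTopology β] {f : Y → β} {U : Set Y} (hf : ContinuousOn f U) (hU : IsOpen U) {p : Y}
    (hp : p ∈ U) : ∀ᶠ q in 𝓝 p, q ∈ U ∧ f q = f p :=
  Filter.Eventually.and (hU.mem_nhds hp) <|
    (hf.continuousAt (hU.mem_nhds hp)).eventually_mem ((isOpen_discrete {f p}).mem_nhds rfl)

theorem antitoneOn_compl_of_drop {Z : Set ℝ} {N : ℝ → ℤ} (hZ : IsClosed Z)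
    (hN : ContinuousOn N Zᶜ)
    (hdrop : ∀ c ∈ Z, ∃ ε > 0, ∀ σ σ', -ε < σ → σ < 0 → 0 < σ' → σ' < ε →
      c + σ ∉ Z ∧ N (c + σ') < N (c + σ)) :
    AntitoneOn N Zᶜ := by
  intro a ha b hb hab
  set s : Set ℝ := {t | t ∉ Z → N t ≤ N a}
  have hs : IsClosed s := by
    have hcompl : sᶜ = Zᶜ ∩ N ⁻¹' Ioi (N a) := by ext; simp [s]
    rw [← isOpen_compl_iff, hcompl]
    exact hN.isOpen_inter_preimage hZ.isOpen_compl (isOpen_discrete _)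
  refine (hs.inter isClosed_Icc).Icc_subset_of_forall_mem_nhdsGT_of_Icc_subset
    (fun _ => le_rfl) ?_ ⟨hab, le_rfl⟩ hb
  intro t ht hts
  by_cases htZ : t ∈ Z
  · obtain ⟨ε, hε, hε'⟩ := hdrop t htZ
    have hat : a < t := lt_of_le_of_ne ht.1 (by rintro rfl; exact ha htZ)
    set σ := max (-(ε / 2)) ((a - t) / 2)
    have hσ₁ : -ε < σ := lt_max_of_lt_left (by linarith)
    have hσ₂ : σ < 0 := max_lt (by linarith) (by linarith)
    have hσa : N (t + σ) ≤ N a :=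
      hts ⟨by linarith [le_max_right (-(ε / 2)) ((a - t) / 2)], by linarith⟩
        (hε' σ (ε / 2) hσ₁ hσ₂ (by linarith) (by linarith)).1
    filter_upwards [Ioo_mem_nhdsGT (show t < t + ε by linarith)] with r hr _
    have hlt := (hε' σ (r - t) hσ₁ hσ₂ (by linarith [hr.1]) (by linarith [hr.2])).2
    rw [add_sub_cancel] at hlt
    omega
  · filter_upwards [nhdsWithin_le_nhds (hN.eventually_mem_and_eq hZ.isOpen_compl htZ)]
      with r ⟨_, hr⟩ _
    rw [hr]
    exact hts ⟨ht.1, le_rfl⟩ htZ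

namespace Flow

variable {τ X : Type*} [AddGroup τ] [TopologicalSpace τ] [TopologicalSpace X]

def periods (ϕ : Flow τ X) (x : X) : AddSubgroup τ where
  carrier := {t | ϕ t x = x}
  add_mem' {s t} (hs : ϕ s x = x) (ht : ϕ t x = x) := by
    change ϕ (s + t) x = x
    rw [map_add, ht, hs]
  zero_mem' := ϕ.map_zero_apply x
  neg_mem' {t} (ht : ϕ t x = x) := by
    change ϕ (-t) x = x
    conv_lhs => rw [← ht, ← map_add, neg_add_cancel, map_zero_apply]

theorem mem_periods {ϕ : Flow τ X} {x : X} {t : τ} : t ∈ ϕ.periods x ↔ ϕ t x = x := Iff.rfl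

theorem isClosed_periods [T2Space X] (ϕ : Flow τ X) (x : X) : IsClosed (ϕ.periods x : Set τ) :=
  isClosed_eq (ϕ.continuous continuous_id continuous_const) continuous_const

theorem injective (ϕ : Flow τ X) (t : τ) : Function.Injective (ϕ t) := by
  intro x y h
  simpa only [← map_add, neg_add_cancel, map_zero_apply] using congrArg (ϕ (-t)) h

end Flow

theorem ContinuousOn.exists_mem_eq_of_mem_closure {Y β : Type*} [TopologicalSpace Y]
    [TopologicalSpace β] [DiscreteTopology β] {f : Y → β} {U A : Set Y} (hf : ContinuousOn f U)
    (hU : IsOpen U) {p : Y} (hpU : p ∈ U) (hpA : p ∈ closure A) : ∃ q ∈ A, q ∈ U ∧ f q = f p :=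
  ((mem_closure_iff_frequently.1 hpA).and_eventually (hf.eventually_mem_and_eq hU hpU)).exists

theorem AddSubgroup.exists_mem_disjoint_Ioc_sub {P : AddSubgroup ℝ} (hP : IsClosed (P : Set ℝ))
    {τ : ℝ} (hτ : 0 ≤ τ) (hτP : τ ∉ P) : ∃ p ∈ P, p < τ ∧ Disjoint (Ioc 0 (τ - p)) P := by
  have hne : (P ∩ Icc 0 τ : Set ℝ).Nonempty := ⟨0, P.zero_mem, le_rfl, hτ⟩
  have hbdd : BddAbove (P ∩ Icc 0 τ : Set ℝ) := ⟨τ, fun _ hq => hq.2.2⟩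
  obtain ⟨hpP, hp0, hpτ⟩ := (hP.inter isClosed_Icc).csSup_mem hne hbdd
  refine ⟨_, hpP, lt_of_le_of_ne hpτ fun h => hτP (h ▸ hpP), ?_⟩
  refine Set.disjoint_left.2 fun g hg hgP => ?_
  have : sSup (P ∩ Icc 0 τ : Set ℝ) + g ≤ sSup (P ∩ Icc 0 τ : Set ℝ) :=
    le_csSup hbdd ⟨P.add_mem hpP hgP, by linarith [hg.1], by linarith [hg.2]⟩
  linarith [hg.1]

theorem AddSubgroup.eq_of_notMem_of_continuousOn {P : AddSubgroup ℝ} (hP : IsClosed (P : Set ℝ))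
    {f : ℝ → ℤ} (hf : ContinuousOn f (P : Set ℝ)ᶜ) (hper : ∀ p ∈ P, ∀ τ, f (τ - p) = f τ)
    (hneg : ∀ τ ∉ P, f (-τ) = f τ) {τ τ' : ℝ} (hτ : τ ∉ P) (hτ' : τ' ∉ P) : f τ = f τ' := by
  have hreduce : ∀ τ ∉ P, ∃ r > 0, Ioc 0 r ⊆ (P : Set ℝ)ᶜ ∧ f r = f τ := by
    intro τ hτ
    wlog h0 : 0 ≤ τ generalizing τ
    · obtain ⟨r, hr, hsub, hfr⟩ := this (-τ) (by rwa [P.neg_mem_iff]) (by linarith)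
      exact ⟨r, hr, hsub, hfr.trans (hneg τ hτ)⟩
    obtain ⟨p, hp, hpτ, hdisj⟩ := P.exists_mem_disjoint_Ioc_sub hP h0 hτ
    exact ⟨τ - p, sub_pos.2 hpτ, hdisj.subset_compl_right, hper p hp τ⟩
  obtain ⟨r, hr, hsub, hfr⟩ := hreduce τ hτ
  obtain ⟨r', hr', hsub', hfr'⟩ := hreduce τ' hτ'
  rw [← hfr, ← hfr']
  have hsub_max : Ioc 0 (max r r') ⊆ (P : Set ℝ)ᶜ := by
    rcases le_total r r' with h | h
    · rwa [max_eq_right h]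
    · rwa [max_eq_left h]
  exact isPreconnected_Ioc.constant (hf.mono hsub_max) ⟨hr, le_max_left _ _⟩
    ⟨hr', le_max_right _ _⟩

theorem Flow.mapClusterPt_prod {X : Type*} [TopologicalSpace X] {ϕ : Flow ℝ X} {u w : X}
    (hw : MapClusterPt w atTop (ϕ · u)) (α β : ℝ) :
    MapClusterPt (ϕ α w, ϕ β w) atTop (fun t => (ϕ t u, ϕ t (ϕ (β - α) u))) := by
  have hg : Continuous fun z => (ϕ α z, ϕ β z) := by fun_prop
  have hshift : (fun t => (ϕ t u, ϕ t (ϕ (β - α) u))) ∘ (· + α) =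
      (fun z => (ϕ α z, ϕ β z)) ∘ (ϕ · u) := by
    ext t <;> simp only [Function.comp, ← Flow.map_add] <;> congr 1 <;> ring
  exact MapClusterPt.of_comp (tendsto_atTop_add_const_right atTop α tendsto_id)
    (hshift ▸ hw.continuousAt_comp hg.continuousAt)

/-- The continuity part of (A1) together with (A4) and (A5). -/
structure IsDiscreteLyapunov {X : Type*} [TopologicalSpace X] (ϕ : Flow ℝ X)
    (S : Set (X × X)) (W : X → X → ℤ) : Prop where
  isClosed : IsClosed S
  diag_mem : ∀ x, (x, x) ∈ S
  continuousOn : ContinuousOn (fun q : X × X => W q.1 q.2) Sᶜ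
  escape : ∀ u v : X, (u, v) ∈ S → u ≠ v →
    ∃ ε > (0 : ℝ), ∀ σ : ℝ, σ ≠ 0 → |σ| < ε → (ϕ σ u, ϕ σ v) ∉ S
  drop : ∀ u v : X, (u, v) ∈ S → u ≠ v →
    ∃ ε > (0 : ℝ), ∀ σ σ' : ℝ, -ε < σ → σ < 0 → 0 < σ' → σ' < ε →
      W (ϕ σ' u) (ϕ σ' v) < W (ϕ σ u) (ϕ σ v)

namespace IsDiscreteLyapunov

variable {X : Type*} [TopologicalSpace X] {ϕ : Flow ℝ X} {S : Set (X × X)} {W : X → X → ℤ}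

theorem antitoneOn (h : IsDiscreteLyapunov ϕ S W) (x y : X) :
    AntitoneOn (fun t => W (ϕ t x) (ϕ t y)) {t | (ϕ t x, ϕ t y) ∉ S} := by
  by_cases hxy : x = y
  · subst hxy
    exact fun t ht => absurd (h.diag_mem _) ht
  have hP : Continuous fun t => (ϕ t x, ϕ t y) := by fun_prop
  refine antitoneOn_compl_of_drop (h.isClosed.preimage hP)
    (h.continuousOn.comp hP.continuousOn fun _ ht => ht) fun c hc => ?_
  have hne : ϕ c x ≠ ϕ c y := (ϕ.injective c).ne hxy
  obtain ⟨ε₄, hε₄, h₄⟩ := h.escape _ _ hc hne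
  obtain ⟨ε₅, hε₅, h₅⟩ := h.drop _ _ hc hne
  refine ⟨min ε₄ ε₅, lt_min hε₄ hε₅, fun σ σ' hσ hσ0 hσ' hσ'ε => ?_⟩
  have hε₄' := min_le_left ε₄ ε₅
  have hε₅' := min_le_right ε₄ ε₅
  change (ϕ (c + σ) x, ϕ (c + σ) y) ∉ S ∧
    W (ϕ (c + σ') x) (ϕ (c + σ') y) < W (ϕ (c + σ) x) (ϕ (c + σ) y)
  simp only [add_comm c, Flow.map_add]
  exact ⟨h₄ σ hσ0.ne (abs_lt.2 ⟨by linarith, by linarith⟩),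
    h₅ σ σ' (by linarith) hσ0 hσ' (by linarith)⟩

theorem exists_nhds_not_frequently (h : IsDiscreteLyapunov ϕ S W) {a b : X} (hab : (a, b) ∈ S)
    (hne : a ≠ b) : ∃ V ∈ 𝓝 (a, b), ∀ x y : X, ¬∃ᶠ t in atTop, (ϕ t x, ϕ t y) ∈ V := by
  obtain ⟨ε₄, hε₄, h₄⟩ := h.escape a b hab hne
  obtain ⟨ε₅, hε₅, h₅⟩ := h.drop a b hab hne
  set ε := min ε₄ ε₅
  have hε : 0 < ε := lt_min hε₄ hε₅
  have hε₄' : ε ≤ ε₄ := min_le_left ε₄ ε₅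
  have hε₅' : ε ≤ ε₅ := min_le_right ε₄ ε₅
  have hbefore : (ϕ (-(ε / 2)) a, ϕ (-(ε / 2)) b) ∉ S :=
    h₄ _ (by linarith) (by rw [abs_neg, abs_of_pos (half_pos hε)]; linarith)
  have hafter : (ϕ (ε / 2) a, ϕ (ε / 2) b) ∉ S :=
    h₄ _ (by linarith) (by rw [abs_of_pos (half_pos hε)]; linarith)
  have hlt : W (ϕ (ε / 2) a) (ϕ (ε / 2) b) < W (ϕ (-(ε / 2)) a) (ϕ (-(ε / 2)) b) :=
    h₅ _ _ (by linarith) (by linarith) (by linarith) (by linarith)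
  have hnear : ∀ θ, (ϕ θ a, ϕ θ b) ∉ S → ∀ᶠ q : X × X in 𝓝 (a, b),
      (ϕ θ q.1, ϕ θ q.2) ∉ S ∧ W (ϕ θ q.1) (ϕ θ q.2) = W (ϕ θ a) (ϕ θ b) := by
    intro θ hθ
    have hF : Continuous fun q : X × X => (ϕ θ q.1, ϕ θ q.2) := by fun_prop
    exact (hF.tendsto (a, b)).eventually
      (h.continuousOn.eventually_mem_and_eq h.isClosed.isOpen_compl hθ)
  refine ⟨_, (hnear _ hbefore).and (hnear _ hafter), fun x y hfreq => ?_⟩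
  obtain ⟨t₁, -, ⟨ht₁S, ht₁W⟩⟩ := hfreq.exists
  obtain ⟨t₂, ht₂, ⟨ht₂S, ht₂W⟩, -⟩ := frequently_atTop.1 hfreq (t₁ + ε)
  simp only [← Flow.map_add] at ht₁S ht₁W ht₂S ht₂W
  have := h.antitoneOn x y ht₁S ht₂S (by linarith)
  simp only [ht₁W, ht₂W] at this
  omega

theorem notMem_of_mem_closure_orbit (h : IsDiscreteLyapunov ϕ S W) {u w : X}
    (hw : MapClusterPt w atTop (ϕ · u)) {a b : X} (ha : a ∈ closure (ϕ.orbit w))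
    (hb : b ∈ closure (ϕ.orbit w)) (hab : a ≠ b) : (a, b) ∉ S := by
  intro habS
  obtain ⟨V, hV, hnot⟩ := h.exists_nhds_not_frequently habS hab
  obtain ⟨U, hUV, hUo, habU⟩ := mem_nhds_iff.1 hV
  have hcl : (a, b) ∈ closure (range (ϕ · w) ×ˢ range (ϕ · w)) := by
    rw [closure_prod_eq]
    exact ⟨ha, hb⟩
  obtain ⟨⟨_, _⟩, hqU, ⟨α, rfl⟩, ⟨β, rfl⟩⟩ := mem_closure_iff.1 hcl U hUo habU
  exact hnot u (ϕ (β - α) u) <|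
    ((ϕ.mapClusterPt_prod hw α β).frequently (hUo.mem_nhds hqU)).mono fun _ ht => hUV ht

theorem apply_eq_of_forall_notMem (h : IsDiscreteLyapunov ϕ S W) {x y : X}
    (hxy : ∀ t, (ϕ t x, ϕ t y) ∉ S) (t : ℝ) : W (ϕ t x) (ϕ t y) = W x y := by
  have hP : Continuous fun t => (ϕ t x, ϕ t y) := by fun_prop
  have := isPreconnected_univ.constant (h.continuousOn.comp hP.continuousOn fun t _ => hxy t)
    (mem_univ t) (mem_univ 0)
  simpa only [Function.comp_apply, Flow.map_zero_apply] using this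

theorem apply_orbit_eq (h : IsDiscreteLyapunov ϕ S W) {u w : X}
    (hw : MapClusterPt w atTop (ϕ · u)) {τ : ℝ} (hτ : τ ∉ ϕ.periods w) (t : ℝ) :
    W (ϕ t w) (ϕ t (ϕ τ w)) = W w (ϕ τ w) :=
  h.apply_eq_of_forall_notMem (fun s => h.notMem_of_mem_closure_orbit hw
    (subset_closure (ϕ.mem_orbit w s))
    (by rw [← Flow.map_add]; exact subset_closure (ϕ.mem_orbit w _))
    ((ϕ.injective s).ne (Ne.symm hτ))) t

theorem apply_eq_of_notMem_periods [T2Space X] (h : IsDiscreteLyapunov ϕ S W)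
    (hsymm : ∀ u v : X, (u, v) ∉ S → W u v = W v u) {u w : X}
    (hw : MapClusterPt w atTop (ϕ · u)) {τ τ' : ℝ} (hτ : τ ∉ ϕ.periods w)
    (hτ' : τ' ∉ ϕ.periods w) : W w (ϕ τ w) = W w (ϕ τ' w) := by
  refine AddSubgroup.eq_of_notMem_of_continuousOn (f := fun τ => W w (ϕ τ w))
    (ϕ.isClosed_periods w) ?_ ?_ ?_ hτ hτ'
  · have hcont : Continuous fun τ => (w, ϕ τ w) :=
      continuous_const.prodMk (ϕ.continuous continuous_id continuous_const)
    exact h.continuousOn.comp hcont.continuousOn fun τ (hτ : ϕ τ w ≠ w) =>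
      h.notMem_of_mem_closure_orbit hw (subset_closure (ϕ.mem_orbit_self w))
        (subset_closure (ϕ.mem_orbit w τ)) hτ.symm
  · intro p hp τ
    have hp' : ϕ (-p) w = w := Flow.mem_periods.1 (neg_mem hp)
    simp only [sub_eq_add_neg, Flow.map_add, hp']
  · intro τ hτ
    have hτ_neg : ϕ (-τ) w ≠ w := fun h' => hτ ((ϕ.periods w).neg_mem_iff.1 h')
    have hback : ϕ (-τ) (ϕ τ w) = w := by rw [← Flow.map_add, neg_add_cancel, Flow.map_zero_apply]
    calc W w (ϕ (-τ) w) = W (ϕ (-τ) w) w :=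
          hsymm _ _ (h.notMem_of_mem_closure_orbit hw (subset_closure (ϕ.mem_orbit_self w))
            (subset_closure (ϕ.mem_orbit w _)) hτ_neg.symm)
      _ = W (ϕ (-τ) w) (ϕ (-τ) (ϕ τ w)) := by rw [hback]
      _ = W w (ϕ τ w) := h.apply_orbit_eq hw hτ _

theorem exists_notMem_periods_apply_eq (h : IsDiscreteLyapunov ϕ S W) {u w : X}
    (hw : MapClusterPt w atTop (ϕ · u)) {w₁ w₂ : X} (h₁ : w₁ ∈ closure (ϕ.orbit w))
    (h₂ : w₂ ∈ closure (ϕ.orbit w)) (hne : w₁ ≠ w₂) :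
    ∃ τ ∉ ϕ.periods w, W w₁ w₂ = W w (ϕ τ w) := by
  have hcl : (w₁, w₂) ∈ closure (range (ϕ · w) ×ˢ range (ϕ · w)) := by
    rw [closure_prod_eq]
    exact ⟨h₁, h₂⟩
  obtain ⟨⟨_, _⟩, ⟨⟨s, rfl⟩, ⟨t, rfl⟩⟩, hS, hW⟩ :=
    h.continuousOn.exists_mem_eq_of_mem_closure h.isClosed.isOpen_compl
      (h.notMem_of_mem_closure_orbit hw h₁ h₂ hne) hcl
  simp only [mem_compl_iff] at hS hW
  have hst : ϕ t w = ϕ s (ϕ (t - s) w) := by rw [← Flow.map_add, add_sub_cancel]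
  have hτ : t - s ∉ ϕ.periods w := fun hper =>
    hS (by rw [hst, Flow.mem_periods.1 hper]; exact h.diag_mem _)
  exact ⟨t - s, hτ, by rw [← hW, hst]; exact h.apply_orbit_eq hw hτ s⟩

end IsDiscreteLyapunov

theorem stmt_8_general {X : Type*} [TopologicalSpace X] [T2Space X]
    (φ : ℝ → X → X)
    (hφc : Continuous fun p : ℝ × X => φ p.1 p.2)
    (hφ0 : ∀ x, φ 0 x = x)
    (hφadd : ∀ σ σ' x, φ (σ + σ') x = φ σ (φ σ' x))
    (S : Set (X × X)) (hScl : IsClosed S)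
    (hΔS : ∀ x : X, (x, x) ∈ S)
    (W : X → X → ℤ)
    -- (A1)
    (hWc : ContinuousOn (fun q : X × X => W q.1 q.2) Sᶜ)
    (hWsym : ∀ u v : X, (u, v) ∉ S → W u v = W v u)
    -- (A4)
    (hA4 : ∀ u v : X, (u, v) ∈ S → u ≠ v →
      ∃ ε > (0 : ℝ), ∀ σ : ℝ, σ ≠ 0 → |σ| < ε → (φ σ u, φ σ v) ∉ S)
    -- (A5)
    (hA5 : ∀ u v : X, (u, v) ∈ S → u ≠ v →
      ∃ ε > (0 : ℝ), ∀ σ σ' : ℝ, -ε < σ → σ < 0 → 0 < σ' → σ' < ε →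
        W (φ σ' u) (φ σ' v) < W (φ σ u) (φ σ v))
    (u w : X)
    (hw : ∃ σs : ℕ → ℝ, Tendsto σs atTop atTop ∧
      Tendsto (fun n => φ (σs n) u) atTop (nhds w)) :
    ∃ k : ℤ, ∀ w₁ ∈ closure {x : X | ∃ σ : ℝ, x = φ σ w},
      ∀ w₂ ∈ closure {x : X | ∃ σ : ℝ, x = φ σ w},
        w₁ ≠ w₂ → W w₁ w₂ = k := by
  let ϕ : Flow ℝ X := ⟨φ, hφc, hφadd, hφ0⟩
  have h : IsDiscreteLyapunov ϕ S W := ⟨hScl, hΔS, hWc, hA4, hA5⟩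
  have hw' : MapClusterPt w atTop (ϕ · u) := by
    obtain ⟨σs, hσs, hσw⟩ := hw
    exact hσw.mapClusterPt.of_comp hσs
  have horbit : {x : X | ∃ σ : ℝ, x = φ σ w} = ϕ.orbit w := by
    ext
    simp [Flow.orbit_eq_range, eq_comm, ϕ]
  rw [horbit]
  by_cases hper : ∃ τ₀, τ₀ ∉ ϕ.periods w
  · obtain ⟨τ₀, hτ₀⟩ := hper
    refine ⟨W w (ϕ τ₀ w), fun w₁ h₁ w₂ h₂ hne => ?_⟩
    obtain ⟨τ, hτ, hW⟩ := h.exists_notMem_periods_apply_eq hw' h₁ h₂ hne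
    exact hW.trans (h.apply_eq_of_notMem_periods hWsym hw' hτ hτ₀)
  · refine ⟨0, fun w₁ h₁ w₂ h₂ hne => ?_⟩
    obtain ⟨τ, hτ, -⟩ := h.exists_notMem_periods_apply_eq hw' h₁ h₂ hne
    exact absurd ⟨τ, hτ⟩ hper

/-- under axioms (A1)–(A5), for w ∈ ω(u) there is an integer
k(w) with W(w¹, w²) = k(w) for all distinct w¹, w² in the closure of γ(w). -/
theorem stmt_8 {X : Type*} [TopologicalSpace X] [CompactSpace X] [T2Space X]
    (φ : ℝ → X → X)
    (hφc : Continuous fun p : ℝ × X => φ p.1 p.2)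
    (hφ0 : ∀ x, φ 0 x = x)
    (hφadd : ∀ σ σ' x, φ (σ + σ') x = φ σ (φ σ' x))
    (S : Set (X × X)) (hScl : IsClosed S)
    (hΔS : ∀ x : X, (x, x) ∈ S)
    (W : X → X → ℤ)
    -- (A1)
    (hWc : ContinuousOn (fun q : X × X => W q.1 q.2) Sᶜ)
    (hWsym : ∀ u v : X, (u, v) ∉ S → W u v = W v u)
    -- (A2), (A3)
    (π : X → ℝ × ℝ) (hπc : Continuous π)
    (hA3 : ∀ u v : X, π u = π v → (u, v) ∈ S)
    -- (A4)
    (hA4 : ∀ u v : X, (u, v) ∈ S → u ≠ v →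
      ∃ ε > (0 : ℝ), ∀ σ : ℝ, σ ≠ 0 → |σ| < ε → (φ σ u, φ σ v) ∉ S)
    -- (A5)
    (hA5 : ∀ u v : X, (u, v) ∈ S → u ≠ v →
      ∃ ε > (0 : ℝ), ∀ σ σ' : ℝ, -ε < σ → σ < 0 → 0 < σ' → σ' < ε →
        W (φ σ' u) (φ σ' v) < W (φ σ u) (φ σ v))
    (u w : X)
    (hw : ∃ σs : ℕ → ℝ, Tendsto σs atTop atTop ∧
      Tendsto (fun n => φ (σs n) u) atTop (nhds w)) :
    ∃ k : ℤ, ∀ w₁ ∈ closure {x : X | ∃ σ : ℝ, x = φ σ w},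
      ∀ w₂ ∈ closure {x : X | ∃ σ : ℝ, x = φ σ w},
        w₁ ≠ w₂ → W w₁ w₂ = k :=
  stmt_8_general φ hφc hφ0 hφadd S hScl hΔS W hWc hWsym hA4 hA5 u w hw
end

section
/- Under the abstract axioms (A1)–(A5), let u ∈ X, e ∈ E an equilibrium, and w ∈ ω(u) with w ≠ e. Then (w, e) ∉ Σ, i.e. W(w, e) is well-defined. -/
open Filter Topology Set

/-- under axioms (A1)–(A5), for an equilibrium e and
w ∈ ω(u) with w ≠ e, the pair (w, e) is not in Σ, so W(w,e) is defined. -/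
theorem stmt_11 {X : Type*} [TopologicalSpace X] [CompactSpace X] [T2Space X]
    (φ : ℝ → X → X)
    (hφc : Continuous fun p : ℝ × X => φ p.1 p.2)
    (hφ0 : ∀ x, φ 0 x = x)
    (hφadd : ∀ σ σ' x, φ (σ + σ') x = φ σ (φ σ' x))
    (S : Set (X × X)) (hScl : IsClosed S)
    (hΔS : ∀ x : X, (x, x) ∈ S)
    (W : X → X → ℤ)
    -- (A1)
    (hWc : ContinuousOn (fun q : X × X => W q.1 q.2) Sᶜ)
    (hWsym : ∀ u v : X, (u, v) ∉ S → W u v = W v u)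
    -- (A2), (A3)
    (π : X → ℝ × ℝ) (hπc : Continuous π)
    (hA3 : ∀ u v : X, π u = π v → (u, v) ∈ S)
    -- (A4)
    (hA4 : ∀ u v : X, (u, v) ∈ S → u ≠ v →
      ∃ ε > (0 : ℝ), ∀ σ : ℝ, σ ≠ 0 → |σ| < ε → (φ σ u, φ σ v) ∉ S)
    -- (A5)
    (hA5 : ∀ u v : X, (u, v) ∈ S → u ≠ v →
      ∃ ε > (0 : ℝ), ∀ σ σ' : ℝ, -ε < σ → σ < 0 → 0 < σ' → σ' < ε →
        W (φ σ' u) (φ σ' v) < W (φ σ u) (φ σ v))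
    (u w : X)
    (hw : ∃ σs : ℕ → ℝ, Tendsto σs atTop atTop ∧
      Tendsto (fun n => φ (σs n) u) atTop (nhds w))
    (e : X) (he : ∀ σ : ℝ, φ σ e = e) (hwe : w ≠ e) :
    (w, e) ∉ S := by
  intro hS
  obtain ⟨σs, hσs, hconv⟩ := hw
  have hφt : ∀ t : ℝ, Continuous (fun x => φ t x) := fun t =>
    hφc.comp (continuous_const.prodMk continuous_id)
  have hφu : Continuous (fun t : ℝ => φ t u) :=
    hφc.comp (continuous_id.prodMk continuous_const)
  -- the trajectory of u never hits e
  have hne : ∀ t : ℝ, φ t u ≠ e := by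
    intro t ht
    have hafter : ∀ s : ℝ, t ≤ s → φ s u = e := by
      intro s hs
      have h1 : φ s u = φ (s - t) (φ t u) := by
        rw [← hφadd]; congr 1; ring
      rw [h1, ht, he]
    have hev : ∀ᶠ n in atTop, φ (σs n) u = e :=
      (hσs.eventually_ge_atTop t).mono fun n hn => hafter _ hn
    have hlim : Tendsto (fun n => φ (σs n) u) atTop (nhds e) :=
      Tendsto.congr' (hev.mono fun n h => h.symm) tendsto_const_nhds
    exact hwe (tendsto_nhds_unique hconv hlim)
  set f : ℝ → ℤ := fun t => W (φ t u) e with hf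
  set T : Set ℝ := {t | (φ t u, e) ∈ S} with hT
  have hg : Continuous (fun t : ℝ => ((φ t u, e) : X × X)) :=
    hφu.prodMk continuous_const
  have hTcl : IsClosed T := hScl.preimage hg
  have hTo : IsOpen Tᶜ := hTcl.isOpen_compl
  -- local constancy of f off T
  have hloc : ∀ t ∉ T, ∀ᶠ s in nhds t, s ∉ T ∧ f s = f t := by
    intro t ht
    have hfc : ContinuousOn f Tᶜ := hWc.comp hg.continuousOn (fun s hs => hs)
    have hca : ContinuousAt f t := hfc.continuousAt (hTo.mem_nhds ht)
    have h1 : ∀ᶠ s in nhds t, f s = f t :=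
      hca ((isOpen_discrete ({f t} : Set ℤ)).mem_nhds rfl)
    exact (hTo.eventually_mem ht).and h1
  -- monotonicity of f between non-crossing times
  have mono : ∀ a b : ℝ, a ≤ b → a ∉ T → b ∉ T → f b ≤ f a := by
    intro a b hab ha hb
    set A : Set ℝ := {t | t ∈ Icc a b ∧ ∀ s, a ≤ s → s ≤ t → s ∉ T → f s ≤ f a} with hA
    have hamem : a ∈ A := by
      refine ⟨⟨le_refl a, hab⟩, ?_⟩
      intro s h1 h2 _
      have hsa : s = a := le_antisymm h2 h1
      rw [hsa]
    have hbdd : BddAbove A := ⟨b, fun t ht => ht.1.2⟩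
    set c := sSup A with hc
    have hac : a ≤ c := le_csSup hbdd hamem
    have hcb : c ≤ b := csSup_le ⟨a, hamem⟩ fun t ht => ht.1.2
    have hQc : ∀ s, a ≤ s → s ≤ c → s ∉ T → f s ≤ f a := by
      intro s hsa hsc hsT
      rcases eq_or_lt_of_le hsa with haeq | halt
      · rw [← haeq]
      · obtain ⟨δ, hδ, hδp⟩ := Metric.eventually_nhds_iff.mp (hloc s hsT)
        set s' := max a (s - δ/2) with hs'
        have hs'lt : s' < s := max_lt halt (by linarith)
        have hdist : dist s' s < δ := by
          rw [Real.dist_eq, abs_lt]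
          have h1 : s - δ/2 ≤ s' := le_max_right _ _
          constructor <;> linarith
        obtain ⟨hs'T, hs'f⟩ := hδp hdist
        have hs'c : s' < c := lt_of_lt_of_le hs'lt hsc
        obtain ⟨t, htA, hst⟩ := exists_lt_of_lt_csSup ⟨a, hamem⟩ hs'c
        have h2 := htA.2 s' (le_max_left _ _) (le_of_lt hst) hs'T
        rw [← hs'f]; exact h2
    have hcbeq : c = b := by
      by_contra hnecb
      have hcb' : c < b := lt_of_le_of_ne hcb hnecb
      by_cases hcT : c ∈ T
      · -- crossing case: use A4 and A5 at (φ c u, e)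
        have hφcu : φ c u ≠ e := hne c
        obtain ⟨ε, hε, h4⟩ := hA4 (φ c u) e hcT hφcu
        obtain ⟨ε', hε', h5⟩ := hA5 (φ c u) e hcT hφcu
        have hacs : a < c := by
          rcases eq_or_lt_of_le hac with h | h
          · exact absurd (h ▸ hcT) ha
          · exact h
        set δ := min (min ε ε') (min (c - a) (b - c)) with hδdef
        have hδ : 0 < δ :=
          lt_min (lt_min hε hε') (lt_min (by linarith) (by linarith))
        have hδε : δ ≤ ε := le_trans (min_le_left _ _) (min_le_left _ _)
        have hδε' : δ ≤ ε' := le_trans (min_le_left _ _) (min_le_right _ _)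
        have hδca : δ ≤ c - a := le_trans (min_le_right _ _) (min_le_left _ _)
        have hδbc : δ ≤ b - c := le_trans (min_le_right _ _) (min_le_right _ _)
        have heqm : φ (-(δ/2)) (φ c u) = φ (c - δ/2) u := by
          rw [← hφadd]; congr 1; ring
        have hm : (c - δ/2) ∉ T := by
          intro hmem
          have h4' := h4 (-(δ/2)) (by intro h0; linarith [neg_eq_zero.mp h0])
            (by rw [abs_of_neg (by linarith : -(δ/2) < (0:ℝ))]; linarith)
          rw [heqm, he] at h4'
          exact h4' hmem
        have hfm : f (c - δ/2) ≤ f a := hQc _ (by linarith) (by linarith) hm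
        have hstep : ∀ σ' : ℝ, 0 < σ' → σ' ≤ δ/2 → (c + σ') ∉ T ∧ f (c + σ') ≤ f a := by
          intro σ' h1 h2
          have heqp : φ σ' (φ c u) = φ (c + σ') u := by
            rw [← hφadd]; congr 1; ring
          constructor
          · intro hmem
            have h4' := h4 σ' (ne_of_gt h1) (by rw [abs_of_pos h1]; linarith)
            rw [heqp, he] at h4'
            exact h4' hmem
          · have h5' := h5 (-(δ/2)) σ' (by linarith) (by linarith) h1 (by linarith)
            rw [heqp, heqm, he, he] at h5'
            exact le_trans (le_of_lt h5') hfm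
        have ht'A : (c + δ/2) ∈ A := by
          refine ⟨⟨by linarith, by linarith⟩, ?_⟩
          intro s h1 h2 h3
          rcases le_or_gt s c with hsc | hsc
          · exact hQc s h1 hsc h3
          · have h4' := (hstep (s - c) (by linarith) (by linarith)).2
            simpa using h4'
        have hle := le_csSup hbdd ht'A
        linarith
      · -- no crossing at c : local constancy extends Q past c
        obtain ⟨δ, hδ, hδp⟩ := Metric.eventually_nhds_iff.mp (hloc c hcT)
        set t' := min b (c + δ/2) with ht'
        have hct' : c < t' := lt_min hcb' (by linarith)
        have ht'A : t' ∈ A := by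
          refine ⟨⟨le_trans hac (le_of_lt hct'), min_le_left _ _⟩, ?_⟩
          intro s h1 h2 h3
          rcases le_or_gt s c with hsc | hsc
          · exact hQc s h1 hsc h3
          · have htd : t' ≤ c + δ/2 := min_le_right _ _
            have hdist : dist s c < δ := by
              rw [Real.dist_eq, abs_lt]
              constructor <;> linarith
            have hfc2 := (hδp hdist).2
            rw [hfc2]
            exact hQc c hac (le_refl c) hcT
        have hle := le_csSup hbdd ht'A
        linarith
    exact hQc b hab hcbeq.ge hb
  -- choose small δ from A4/A5 at (w, e)
  obtain ⟨ε, hε, h4⟩ := hA4 w e hS hwe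
  obtain ⟨ε', hε', h5⟩ := hA5 w e hS hwe
  set δ := min ε ε' / 2 with hδd
  have hδ : 0 < δ := half_pos (lt_min hε hε')
  have hδε : δ < ε := by
    have h1 : min ε ε' ≤ ε := min_le_left _ _
    have h2 : 0 < min ε ε' := lt_min hε hε'
    rw [hδd]; linarith
  have hδε' : δ < ε' := by
    have h1 : min ε ε' ≤ ε' := min_le_right _ _
    have h2 : 0 < min ε ε' := lt_min hε hε'
    rw [hδd]; linarith
  have hpm : (φ (-δ) w, e) ∉ S := by
    have h4' := h4 (-δ) (by intro h0; linarith [neg_eq_zero.mp h0])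
      (by rw [abs_of_neg (by linarith : -δ < (0:ℝ))]; linarith)
    rwa [he] at h4'
  have hpp : (φ δ w, e) ∉ S := by
    have h4' := h4 δ (ne_of_gt hδ) (by rw [abs_of_pos hδ]; linarith)
    rwa [he] at h4'
  have hlt : W (φ δ w) e < W (φ (-δ) w) e := by
    have h5' := h5 (-δ) δ (by linarith) (by linarith) hδ (by linarith)
    rwa [he, he] at h5'
  -- eventual equality of W along the trajectory near ω-limit points
  have hnbhd : ∀ p : X, (p, e) ∉ S → ∀ᶠ x in nhds p, (x, e) ∉ S ∧ W x e = W p e := by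
    intro p hp
    have hh : Continuous (fun x : X => ((x, e) : X × X)) :=
      continuous_id.prodMk continuous_const
    have hopen : IsOpen {x : X | (x, e) ∉ S} := hScl.isOpen_compl.preimage hh
    have hca : ContinuousAt (fun x => W x e) p := by
      have h1 : ContinuousAt (fun q : X × X => W q.1 q.2) (p, e) :=
        hWc.continuousAt (hScl.isOpen_compl.mem_nhds hp)
      exact ContinuousAt.comp (g := fun q : X × X => W q.1 q.2)
        (f := fun x : X => ((x, e) : X × X)) h1 hh.continuousAt
    have h1 : ∀ᶠ x in nhds p, W x e = W p e :=
      hca ((isOpen_discrete ({W p e} : Set ℤ)).mem_nhds rfl)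
    exact (hopen.eventually_mem hp).and h1
  have hconvm : Tendsto (fun n => φ (σs n + (-δ)) u) atTop (nhds (φ (-δ) w)) := by
    have h1 : Tendsto (fun n => φ (-δ) (φ (σs n) u)) atTop (nhds (φ (-δ) w)) :=
      ((hφt (-δ)).tendsto w).comp hconv
    refine h1.congr fun n => ?_
    rw [← hφadd]; congr 1; ring
  have hconvp : Tendsto (fun n => φ (σs n + δ) u) atTop (nhds (φ δ w)) := by
    have h1 : Tendsto (fun n => φ δ (φ (σs n) u)) atTop (nhds (φ δ w)) :=
      ((hφt δ).tendsto w).comp hconv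
    refine h1.congr fun n => ?_
    rw [← hφadd]; congr 1; ring
  have hevm : ∀ᶠ n in atTop,
      (φ (σs n + (-δ)) u, e) ∉ S ∧ W (φ (σs n + (-δ)) u) e = W (φ (-δ) w) e :=
    hconvm.eventually (hnbhd _ hpm)
  have hevp : ∀ᶠ n in atTop,
      (φ (σs n + δ) u, e) ∉ S ∧ W (φ (σs n + δ) u) e = W (φ δ w) e :=
    hconvp.eventually (hnbhd _ hpp)
  obtain ⟨n, hn⟩ := hevp.exists
  have hev2 : ∀ᶠ m in atTop, σs n + δ + δ < σs m := hσs.eventually_gt_atTop _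
  obtain ⟨m, hm1, hm2⟩ := (hevm.and hev2).exists
  have hmono := mono (σs n + δ) (σs m + (-δ)) (by linarith) hn.1 hm1.1
  simp only [hf] at hmono
  rw [hn.2, hm1.2] at hmono
  exact absurd hmono (not_le.mpr hlt)
end

section
/- Under the abstract axioms (A1)–(A5), let u ∈ X and suppose e ∈ E ∩ ω(u) with ω(u) ≠ {e}. Then there exists σ̄ ∈ ℝ such that σ ↦ W(φ^σ(u), e) is defined and constant for all σ > σ̄. -/
open Filter Topology Set

/-- under axioms (A1)–(A5), if e is an equilibrium in ω(u)
and ω(u) ≠ {e}, then σ ↦ W(φ^σ(u), e) is defined and constant for σ large. -/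
theorem stmt_12 {X : Type*} [TopologicalSpace X] [CompactSpace X] [T2Space X]
    (φ : ℝ → X → X)
    (hφc : Continuous fun p : ℝ × X => φ p.1 p.2)
    (hφ0 : ∀ x, φ 0 x = x)
    (hφadd : ∀ σ σ' x, φ (σ + σ') x = φ σ (φ σ' x))
    (S : Set (X × X)) (hScl : IsClosed S)
    (hΔS : ∀ x : X, (x, x) ∈ S)
    (W : X → X → ℤ)
    -- (A1)
    (hWc : ContinuousOn (fun q : X × X => W q.1 q.2) Sᶜ)
    (hWsym : ∀ u v : X, (u, v) ∉ S → W u v = W v u)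
    -- (A2), (A3)
    (π : X → ℝ × ℝ) (hπc : Continuous π)
    (hA3 : ∀ u v : X, π u = π v → (u, v) ∈ S)
    -- (A4)
    (hA4 : ∀ u v : X, (u, v) ∈ S → u ≠ v →
      ∃ ε > (0 : ℝ), ∀ σ : ℝ, σ ≠ 0 → |σ| < ε → (φ σ u, φ σ v) ∉ S)
    -- (A5)
    (hA5 : ∀ u v : X, (u, v) ∈ S → u ≠ v →
      ∃ ε > (0 : ℝ), ∀ σ σ' : ℝ, -ε < σ → σ < 0 → 0 < σ' → σ' < ε →
        W (φ σ' u) (φ σ' v) < W (φ σ u) (φ σ v))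
    (u e : X) (he : ∀ σ : ℝ, φ σ e = e)
    (heω : e ∈ {w : X | ∃ σs : ℕ → ℝ, Tendsto σs atTop atTop ∧
      Tendsto (fun n => φ (σs n) u) atTop (nhds w)})
    (hne : {w : X | ∃ σs : ℕ → ℝ, Tendsto σs atTop atTop ∧
      Tendsto (fun n => φ (σs n) u) atTop (nhds w)} ≠ {e}) :
    ∃ σbar : ℝ, (∀ σ : ℝ, σbar < σ → (φ σ u, e) ∉ S) ∧
      ∀ σ σ' : ℝ, σbar < σ → σbar < σ' → W (φ σ u) e = W (φ σ' u) e := by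
  set Ω : Set X := {w : X | ∃ σs : ℕ → ℝ, Tendsto σs atTop atTop ∧
      Tendsto (fun n => φ (σs n) u) atTop (nhds w)} with hΩ
  -- continuity of the orbit map
  have hgc : Continuous fun σ : ℝ => φ σ u :=
    hφc.comp (continuous_id.prodMk continuous_const)
  have hpc : Continuous fun σ : ℝ => ((φ σ u, e) : X × X) :=
    hgc.prodMk continuous_const
  have hCcl : IsClosed {σ : ℝ | (φ σ u, e) ∈ S} := hScl.preimage hpc
  have hCo : IsOpen {σ : ℝ | (φ σ u, e) ∉ S} := hCcl.isOpen_compl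
  have hFcont : ContinuousOn (fun σ : ℝ => W (φ σ u) e) {σ : ℝ | (φ σ u, e) ∉ S} :=
    hWc.comp hpc.continuousOn (fun σ hσ => hσ)
  -- constancy on crossing-free intervals
  have hconst : ∀ a b : ℝ, a ≤ b → (∀ r ∈ Set.Icc a b, (φ r u, e) ∉ S) →
      W (φ a u) e = W (φ b u) e := by
    intro a b hab hsub
    have himg := (isPreconnected_Icc (a := a) (b := b)).image _ (hFcont.mono hsub)
    exact himg.subsingleton (Set.mem_image_of_mem _ (Set.left_mem_Icc.mpr hab))
      (Set.mem_image_of_mem _ (Set.right_mem_Icc.mpr hab))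
  -- the orbit never reaches e
  have hgne : ∀ σ : ℝ, φ σ u ≠ e := by
    intro σ₀ h0
    apply hne
    apply Set.eq_singleton_iff_unique_mem.mpr
    refine ⟨heω, ?_⟩
    rintro w ⟨σs, hσs, hconv⟩
    have hev : ∀ᶠ n in atTop, φ (σs n) u = e := by
      filter_upwards [hσs.eventually_ge_atTop σ₀] with n hn
      have h1 : φ (σs n) u = φ (σs n - σ₀) (φ σ₀ u) := by
        rw [← hφadd, sub_add_cancel]
      rw [h1, h0, he]
    exact tendsto_nhds_unique (hconv.congr' hev) tendsto_const_nhds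
  -- packaged A4/A5 at a crossing time
  have hcross : ∀ c : ℝ, (φ c u, e) ∈ S → ∃ ε > (0 : ℝ),
      (∀ σ : ℝ, σ ≠ 0 → |σ| < ε → (φ (c + σ) u, e) ∉ S) ∧
      (∀ σ σ' : ℝ, -ε < σ → σ < 0 → 0 < σ' → σ' < ε →
        W (φ (c + σ') u) e < W (φ (c + σ) u) e) := by
    intro c hc
    obtain ⟨ε4, hε4, h4⟩ := hA4 (φ c u) e hc (hgne c)
    obtain ⟨ε5, hε5, h5⟩ := hA5 (φ c u) e hc (hgne c)
    refine ⟨min ε4 ε5, lt_min hε4 hε5, ?_, ?_⟩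
    · intro σ hσ0 hσε
      have h := h4 σ hσ0 (lt_of_lt_of_le hσε (min_le_left _ _))
      rwa [he, ← hφadd, add_comm σ c] at h
    · intro σ σ' h1 h2 h3 h4'
      have h := h5 σ σ' (lt_of_le_of_lt (neg_le_neg (min_le_right ε4 ε5)) h1) h2 h3
        (h4'.trans_le (min_le_right _ _))
      rwa [he, he, ← hφadd, ← hφadd, add_comm σ c, add_comm σ' c] at h
  -- monotonicity of W along crossing-free times
  have hmono : ∀ s t : ℝ, s ≤ t → (φ s u, e) ∉ S → (φ t u, e) ∉ S →
      W (φ t u) e ≤ W (φ s u) e := by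
    intro s t hst hsC htC
    set A : Set ℝ := {r | r ∈ Set.Icc s t ∧ ∀ r', s ≤ r' → r' ≤ r →
      (φ r' u, e) ∉ S → W (φ r' u) e ≤ W (φ s u) e} with hA
    have hsA : s ∈ A := ⟨⟨le_refl s, hst⟩, fun r' h1 h2 _ => by
      have hre : r' = s := le_antisymm h2 h1
      rw [hre]⟩
    have hbdd : BddAbove A := ⟨t, fun r hr => hr.1.2⟩
    have hAne : A.Nonempty := ⟨s, hsA⟩
    set b := sSup A with hb
    have hsb : s ≤ b := le_csSup hbdd hsA
    have hbt : b ≤ t := csSup_le hAne fun r hr => hr.1.2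
    have hlt : ∀ r', s ≤ r' → r' < b → (φ r' u, e) ∉ S →
        W (φ r' u) e ≤ W (φ s u) e := by
      intro r' h1 h2 h3
      obtain ⟨a, haA, har⟩ := exists_lt_of_lt_csSup hAne h2
      exact haA.2 r' h1 har.le h3
    have hble : ∀ r', s ≤ r' → r' ≤ b → (φ r' u, e) ∉ S →
        W (φ r' u) e ≤ W (φ s u) e := by
      intro r' h1 h2 h3
      rcases lt_or_eq_of_le h2 with h2' | h2'
      · exact hlt r' h1 h2' h3
      rcases eq_or_lt_of_le h1 with hsr | hsr
      · rw [← hsr]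
      · obtain ⟨δ, hδ, hball⟩ := Metric.isOpen_iff.mp hCo r' h3
        set r'' := max s (r' - δ/2) with hr''
        have h4r : r' - δ/2 ≤ r'' := le_max_right _ _
        have hr''b : r'' < r' := max_lt hsr (by linarith)
        have hIcc : ∀ r ∈ Set.Icc r'' r', (φ r u, e) ∉ S := by
          intro r hr
          apply hball
          rw [Metric.mem_ball, Real.dist_eq, abs_sub_lt_iff]
          have h2r := hr.1
          have h3r := hr.2
          constructor <;> linarith
        have hr''C : (φ r'' u, e) ∉ S := hIcc r'' ⟨le_refl _, hr''b.le⟩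
        have heq := hconst r'' r' hr''b.le hIcc
        rw [← heq]
        exact hlt r'' (le_max_left _ _) (h2' ▸ hr''b) hr''C
    have hbteq : b = t := by
      by_contra hbne
      have hblt : b < t := lt_of_le_of_ne hbt hbne
      by_cases hbC : (φ b u, e) ∈ S
      · obtain ⟨ε, hε, h4, h5⟩ := hcross b hbC
        have hsblt : s < b := by
          rcases eq_or_lt_of_le hsb with h | h
          · exfalso; rw [← h] at hbC; exact hsC hbC
          · exact h
        have hmin1 : min ε (b - s) ≤ ε := min_le_left _ _
        have hmin2 : min ε (b - s) ≤ b - s := min_le_right _ _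
        have hmin0 : 0 < min ε (b - s) := lt_min hε (by linarith)
        set σn := -(min ε (b - s)) / 2 with hσn
        have hσnneg : σn < 0 := by rw [hσn]; linarith
        have h4n : (φ (b + σn) u, e) ∉ S :=
          h4 σn hσnneg.ne (by rw [abs_of_neg hσnneg, hσn]; linarith)
        have hWn : W (φ (b + σn) u) e ≤ W (φ s u) e :=
          hble (b + σn) (by linarith) (by linarith) h4n
        set b'' := min (b + ε/2) t with hb''
        have hbb'' : b < b'' := lt_min (by linarith) hblt
        have hb''le : b'' ≤ b + ε/2 := min_le_left _ _
        have hb''A : b'' ∈ A := by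
          refine ⟨⟨by linarith, min_le_right _ _⟩, ?_⟩
          intro r' h1 h2 h3
          rcases le_or_gt r' b with hr' | hr'
          · exact hble r' h1 hr' h3
          · have h5' := h5 σn (r' - b) (by linarith) (by linarith) (by linarith)
              (by linarith)
            have hre : b + (r' - b) = r' := by ring
            rw [hre] at h5'
            exact le_trans h5'.le hWn
        have := le_csSup hbdd hb''A
        linarith
      · obtain ⟨δ, hδ, hball⟩ := Metric.isOpen_iff.mp hCo b hbC
        set b'' := min (b + δ/2) t with hb''
        have hbb'' : b < b'' := lt_min (by linarith) hblt
        have hb''le : b'' ≤ b + δ/2 := min_le_left _ _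
        have hb''A : b'' ∈ A := by
          refine ⟨⟨by linarith, min_le_right _ _⟩, ?_⟩
          intro r' h1 h2 h3
          rcases le_or_gt r' b with hr' | hr'
          · exact hble r' h1 hr' h3
          · have hIcc : ∀ r ∈ Set.Icc b r', (φ r u, e) ∉ S := by
              intro r hr
              apply hball
              rw [Metric.mem_ball, Real.dist_eq, abs_sub_lt_iff]
              have h2r := hr.1
              have h3r := hr.2
              constructor <;> linarith
            have heq := hconst b r' hr'.le hIcc
            rw [← heq]
            exact hble b hsb (le_refl b) hbC
        have := le_csSup hbdd hb''A
        linarith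
    exact hble t hst hbteq.ge htC
  -- a non-equilibrium limit point
  obtain ⟨w, hwω, hwe⟩ : ∃ w, w ∈ Ω ∧ w ≠ e := by
    by_contra h
    push_neg at h
    exact hne (Set.eq_singleton_iff_unique_mem.mpr ⟨heω, h⟩)
  -- adjust it off S
  obtain ⟨w', hw'ω, hw'S⟩ : ∃ w', w' ∈ Ω ∧ (w', e) ∉ S := by
    by_cases hwS : (w, e) ∈ S
    · obtain ⟨ε, hε, h4⟩ := hA4 w e hwS hwe
      refine ⟨φ (ε/2) w, ?_, ?_⟩
      · obtain ⟨σs, hσs, hconv⟩ := hwω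
        refine ⟨fun n => σs n + ε/2, tendsto_atTop_add_const_right _ _ hσs, ?_⟩
        have hcont : Continuous fun x => φ (ε/2) x :=
          hφc.comp (continuous_const.prodMk continuous_id)
        have ht := (hcont.tendsto w).comp hconv
        refine ht.congr fun n => ?_
        show φ (ε/2) (φ (σs n) u) = φ (σs n + ε/2) u
        rw [← hφadd, add_comm (ε/2) (σs n)]
      · have h := h4 (ε/2) (by positivity) (by rw [abs_of_pos (by linarith)]; linarith)
        rwa [he] at h
    · exact ⟨w, hwω, hwS⟩
  set m := W w' e with hm
  -- W equals m near (w', e), off S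
  have hAt : ContinuousAt (fun q : X × X => W q.1 q.2) (w', e) :=
    hWc.continuousAt (hScl.isOpen_compl.mem_nhds hw'S)
  have hV : {q : X × X | q ∉ S ∧ W q.1 q.2 = m} ∈ nhds (w', e) := by
    have h1 : (fun q : X × X => W q.1 q.2) ⁻¹' {m} ∈ nhds (w', e) :=
      hAt ((isOpen_discrete ({m} : Set ℤ)).mem_nhds rfl)
    have h2 : Sᶜ ∈ nhds (w', e) := hScl.isOpen_compl.mem_nhds hw'S
    filter_upwards [h1, h2] with q hq1 hq2
    exact ⟨hq2, hq1⟩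
  -- arbitrarily late times with value m
  have hrec : ∀ a : ℝ, ∃ t, a < t ∧ (φ t u, e) ∉ S ∧ W (φ t u) e = m := by
    intro a
    obtain ⟨σs, hσs, hconv⟩ := hw'ω
    have hq : Tendsto (fun n => ((φ (σs n) u, e) : X × X)) atTop (nhds (w', e)) :=
      hconv.prodMk_nhds tendsto_const_nhds
    have h1 : ∀ᶠ n in atTop,
        ((φ (σs n) u, e) : X × X) ∈ {q : X × X | q ∉ S ∧ W q.1 q.2 = m} :=
      hq.eventually_mem hV
    have h2 := hσs.eventually_gt_atTop a
    obtain ⟨n, hn1, hn2⟩ := (h1.and h2).exists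
    exact ⟨σs n, hn2, hn1.1, hn1.2⟩
  -- main dichotomy
  by_cases hbnd : ∃ σbar : ℝ, ∀ σ, σbar < σ → (φ σ u, e) ∉ S
  · obtain ⟨σbar, hσbar⟩ := hbnd
    refine ⟨σbar, hσbar, ?_⟩
    intro σ σ' h1 h2
    rcases le_total σ σ' with h | h
    · exact hconst σ σ' h (fun r hr => hσbar r (lt_of_lt_of_le h1 hr.1))
    · exact (hconst σ' σ h (fun r hr => hσbar r (lt_of_lt_of_le h2 hr.1))).symm
  · exfalso
    push_neg at hbnd
    obtain ⟨t₀, ht₀, ht₀C, ht₀m⟩ := hrec 0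
    obtain ⟨c, hct₀, hcC⟩ := hbnd t₀
    obtain ⟨ε, hε, h4, h5⟩ := hcross c hcC
    have hmin1 : min ε (c - t₀) ≤ ε := min_le_left _ _
    have hmin2 : min ε (c - t₀) ≤ c - t₀ := min_le_right _ _
    have hmin0 : 0 < min ε (c - t₀) := lt_min hε (by linarith)
    set σn := -(min ε (c - t₀)) / 2 with hσn
    have hσnneg : σn < 0 := by rw [hσn]; linarith
    have hs₁C : (φ (c + σn) u, e) ∉ S :=
      h4 σn hσnneg.ne (by rw [abs_of_neg hσnneg]; rw [hσn]; linarith)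
    have hs₁le : W (φ (c + σn) u) e ≤ m := by
      rw [← ht₀m]
      exact hmono t₀ (c + σn) (by rw [hσn]; linarith) ht₀C hs₁C
    have ht₁C : (φ (c + ε/2) u, e) ∉ S :=
      h4 (ε/2) (by positivity) (by rw [abs_of_pos (by linarith)]; linarith)
    have ht₁lt : W (φ (c + ε/2) u) e < m :=
      lt_of_lt_of_le (h5 σn (ε/2) (by rw [hσn]; linarith) hσnneg (by linarith)
        (by linarith)) hs₁le
    obtain ⟨t₂, ht₂, ht₂C, ht₂m⟩ := hrec (c + ε/2)
    have hfin := hmono (c + ε/2) t₂ ht₂.le ht₁C ht₂C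
    rw [ht₂m] at hfin
    exact absurd (lt_of_le_of_lt hfin ht₁lt) (lt_irrefl m)
end

section
/- Under the abstract axioms (A1)–(A5), for each u ∈ X there exists an integer k₀ such that W(w, e) = k₀ for every w ∈ ω(u) and every equilibrium e ∈ E ∩ ω(u) with w ≠ e. -/
open Filter Topology Set

lemma mono_aux (G : Set ℝ) (f : ℝ → ℤ)
    (h1 : ∀ t ∈ G, ∃ δ > (0:ℝ), ∀ s : ℝ, |s - t| < δ → s ∈ G ∧ f s = f t)
    (h2 : ∀ t ∉ G, ∃ δ > (0:ℝ), (∀ s : ℝ, s ≠ t → |s - t| < δ → s ∈ G) ∧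
        (∀ σ σ' : ℝ, -δ < σ → σ < 0 → 0 < σ' → σ' < δ → f (t + σ') < f (t + σ))) :
    ∀ t1 ∈ G, ∀ t2 ∈ G, t1 ≤ t2 → f t2 ≤ f t1 := by
  intro t1 ht1 t2 ht2 h12
  set A : Set ℝ := {s | t1 ≤ s ∧ s ≤ t2 ∧ ∀ r, t1 ≤ r → r ≤ s → r ∈ G → f r ≤ f t1} with hA
  have ht1A : t1 ∈ A := by
    refine ⟨le_refl _, h12, fun r h1r hr1 _ => ?_⟩
    have : r = t1 := le_antisymm hr1 h1r
    simp [this]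
  have hne : A.Nonempty := ⟨t1, ht1A⟩
  have hbdd : BddAbove A := ⟨t2, fun s hs => hs.2.1⟩
  set c := sSup A with hc
  have hc1 : t1 ≤ c := le_csSup hbdd ht1A
  have hc2 : c ≤ t2 := csSup_le hne fun s hs => hs.2.1
  have hK : ∀ r, t1 ≤ r → r < c → r ∈ G → f r ≤ f t1 := by
    intro r hr1 hrc hrG
    obtain ⟨s, hsA, hrs⟩ := exists_lt_of_lt_csSup hne hrc
    exact hsA.2.2 r hr1 hrs.le hrG
  have hcA : c ∈ A := by
    refine ⟨hc1, hc2, ?_⟩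
    intro r hr1 hrc hrG
    rcases lt_or_eq_of_le hrc with h | h
    · exact hK r hr1 h hrG
    · rcases eq_or_lt_of_le hr1 with h' | h'
      · rw [← h']
      · obtain ⟨δ, hδ, hδp⟩ := h1 r hrG
        have hr'lt : max (r - δ/2) ((t1 + r)/2) < r := max_lt (by linarith) (by linarith)
        have h1r' : t1 ≤ max (r - δ/2) ((t1 + r)/2) := le_trans (by linarith) (le_max_right _ _)
        have habs : |max (r - δ/2) ((t1 + r)/2) - r| < δ := by
          rw [abs_lt]
          constructor
          · have : r - δ/2 ≤ max (r - δ/2) ((t1 + r)/2) := le_max_left _ _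
            linarith
          · linarith
        obtain ⟨hG', hf'⟩ := hδp _ habs
        rw [← hf']
        exact hK _ h1r' (h ▸ hr'lt) hG'
  have hct2 : c = t2 := by
    by_contra hne2
    have hclt : c < t2 := lt_of_le_of_ne hc2 hne2
    by_cases hcG : c ∈ G
    · obtain ⟨δ, hδ, hδp⟩ := h1 c hcG
      have hcs : c < min (c + δ/2) t2 := lt_min (by linarith) hclt
      have hsA : min (c + δ/2) t2 ∈ A := by
        refine ⟨le_trans hc1 hcs.le, min_le_right _ _, ?_⟩
        intro r hr1 hrs hrG
        rcases le_or_gt r c with h | h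
        · exact hcA.2.2 r hr1 h hrG
        · have hrd : r ≤ c + δ/2 := le_trans hrs (min_le_left _ _)
          have habs : |r - c| < δ := by rw [abs_lt]; constructor <;> linarith
          obtain ⟨_, hf⟩ := hδp r habs
          rw [hf]
          exact hcA.2.2 c hc1 le_rfl hcG
      exact absurd (le_csSup hbdd hsA) (not_le.mpr hcs)
    · obtain ⟨δ, hδ, hGnear, hdrop⟩ := h2 c hcG
      have hct1 : t1 < c := by
        rcases eq_or_lt_of_le hc1 with h | h
        · exact absurd (h ▸ ht1) hcG
        · exact h
      have hm0 : 0 < min (δ/2) ((c - t1)/2) := lt_min (by linarith) (by linarith)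
      have hmδ : min (δ/2) ((c - t1)/2) < δ := lt_of_le_of_lt (min_le_left _ _) (by linarith)
      have hmc : min (δ/2) ((c - t1)/2) ≤ (c - t1)/2 := min_le_right _ _
      have hneq : c - min (δ/2) ((c - t1)/2) ≠ c := by
        intro h
        have h0 : min (δ/2) ((c - t1)/2) = 0 := by linarith
        exact hm0.ne' h0
      have habs : |c - min (δ/2) ((c - t1)/2) - c| < δ := by
        rw [show c - min (δ/2) ((c - t1)/2) - c = -(min (δ/2) ((c - t1)/2)) by ring,
          abs_neg, abs_of_pos hm0]
        exact hmδ
      have r₀G : (c - min (δ/2) ((c - t1)/2)) ∈ G := hGnear _ hneq habs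
      have hr₀ : f (c - min (δ/2) ((c - t1)/2)) ≤ f t1 := hK _ (by linarith) (by linarith) r₀G
      have hcs : c < min (c + δ/2) t2 := lt_min (by linarith) hclt
      have hsA : min (c + δ/2) t2 ∈ A := by
        refine ⟨le_trans hc1 hcs.le, min_le_right _ _, ?_⟩
        intro r hr1 hrs hrG
        rcases lt_trichotomy r c with h | h | h
        · exact hK r hr1 h hrG
        · exact absurd (h ▸ hrG) hcG
        · have hrd : r ≤ c + δ/2 := le_trans hrs (min_le_left _ _)
          have hlt := hdrop (-(min (δ/2) ((c - t1)/2))) (r - c) (by linarith) (by linarith)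
            (by linarith) (by linarith)
          rw [show c + (r - c) = r by ring,
            show c + -(min (δ/2) ((c - t1)/2)) = c - min (δ/2) ((c - t1)/2) by ring] at hlt
          linarith
      exact absurd (le_csSup hbdd hsA) (not_le.mpr hcs)
  exact (hct2 ▸ hcA).2.2 t2 h12 le_rfl ht2


/-- under axioms (A1)–(A5), for each u there is k₀ ∈ ℤ with
W(w, e) = k₀ for every w ∈ ω(u) and every equilibrium e ∈ E ∩ ω(u), w ≠ e. -/
theorem stmt_13 {X : Type*} [TopologicalSpace X] [CompactSpace X] [T2Space X]
    (φ : ℝ → X → X)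
    (hφc : Continuous fun p : ℝ × X => φ p.1 p.2)
    (hφ0 : ∀ x, φ 0 x = x)
    (hφadd : ∀ σ σ' x, φ (σ + σ') x = φ σ (φ σ' x))
    (S : Set (X × X)) (hScl : IsClosed S)
    (hΔS : ∀ x : X, (x, x) ∈ S)
    (W : X → X → ℤ)
    -- (A1)
    (hWc : ContinuousOn (fun q : X × X => W q.1 q.2) Sᶜ)
    (hWsym : ∀ u v : X, (u, v) ∉ S → W u v = W v u)
    -- (A2), (A3)
    (π : X → ℝ × ℝ) (hπc : Continuous π)
    (hA3 : ∀ u v : X, π u = π v → (u, v) ∈ S)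
    -- (A4)
    (hA4 : ∀ u v : X, (u, v) ∈ S → u ≠ v →
      ∃ ε > (0 : ℝ), ∀ σ : ℝ, σ ≠ 0 → |σ| < ε → (φ σ u, φ σ v) ∉ S)
    -- (A5)
    (hA5 : ∀ u v : X, (u, v) ∈ S → u ≠ v →
      ∃ ε > (0 : ℝ), ∀ σ σ' : ℝ, -ε < σ → σ < 0 → 0 < σ' → σ' < ε →
        W (φ σ' u) (φ σ' v) < W (φ σ u) (φ σ v))
    (u : X) :
    ∃ k₀ : ℤ,
      ∀ w ∈ {w : X | ∃ σs : ℕ → ℝ, Tendsto σs atTop atTop ∧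
          Tendsto (fun n => φ (σs n) u) atTop (nhds w)},
      ∀ e ∈ {w : X | ∃ σs : ℕ → ℝ, Tendsto σs atTop atTop ∧
          Tendsto (fun n => φ (σs n) u) atTop (nhds w)},
        (∀ σ : ℝ, φ σ e = e) → w ≠ e → W w e = k₀ := by
  classical
  set ω : Set X := {w : X | ∃ σs : ℕ → ℝ, Tendsto σs atTop atTop ∧
      Tendsto (fun n => φ (σs n) u) atTop (nhds w)} with hωdef
  by_cases hcase : ∃ t : ℝ, ∃ e : X, (∀ σ, φ σ e = e) ∧ φ t u = e
  · obtain ⟨t, e, he, hte⟩ := hcase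
    refine ⟨0, ?_⟩
    intro w hw e'' he'' _ hne
    exfalso
    have key : ∀ z ∈ ω, z = e := by
      rintro z ⟨σs, hσ, hz⟩
      have hev : ∀ᶠ n in atTop, φ (σs n) u = e := by
        filter_upwards [hσ.eventually_ge_atTop t] with n hn
        have h1 : φ (σs n) u = φ (σs n - t) (φ t u) := by
          rw [← hφadd]; congr 1; ring
        rw [h1, hte, he]
      have : Tendsto (fun n => φ (σs n) u) atTop (nhds e) :=
        Tendsto.congr' (EventuallyEq.symm hev) tendsto_const_nhds
      exact tendsto_nhds_unique hz this
    exact hne ((key w hw).trans (key e'' he'').symm)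
  · push_neg at hcase
    -- hcase : ∀ t e, (∀ σ, φ σ e = e) → φ t u ≠ e
    have hinv : ∀ w, w ∈ ω → ∀ σ : ℝ, φ σ w ∈ ω := by
      intro w hw σ
      obtain ⟨σs, hσ1, hσ2⟩ := hw
      refine ⟨fun n => σs n + σ, tendsto_atTop_add_const_right _ σ hσ1, ?_⟩
      have hc : Continuous fun x => φ σ x := hφc.comp (continuous_const.prodMk continuous_id)
      have h := (hc.tendsto w).comp hσ2
      refine h.congr fun n => ?_
      show φ σ (φ (σs n) u) = φ (σs n + σ) u
      rw [← hφadd, add_comm]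
    have hLC : ∀ (e x : X), (x, e) ∉ S → ∃ U : Set X, IsOpen U ∧ x ∈ U ∧
        ∀ y ∈ U, (y, e) ∉ S ∧ W y e = W x e := by
      intro e x hxe
      have hopen : IsOpen Sᶜ := hScl.isOpen_compl
      have hca : ContinuousAt (fun q : X × X => W q.1 q.2) (x, e) :=
        hWc.continuousAt (hopen.mem_nhds hxe)
      have h1 : (fun q : X × X => W q.1 q.2) ⁻¹' {W x e} ∈ nhds (x, e) :=
        hca ((isOpen_discrete _).mem_nhds rfl)
      have h2 := Filter.inter_mem h1 (hopen.mem_nhds hxe)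
      rw [mem_nhds_prod_iff] at h2
      obtain ⟨U, hU, V, hV, hUV⟩ := h2
      obtain ⟨U₀, hU₀sub, hU₀open, hxU₀⟩ := mem_nhds_iff.mp hU
      refine ⟨U₀, hU₀open, hxU₀, fun y hy => ?_⟩
      have hyV : (y, e) ∈ U ×ˢ V := ⟨hU₀sub hy, mem_of_mem_nhds hV⟩
      have := hUV hyV
      exact ⟨this.2, this.1⟩
    have hOM : ∀ (e : X), ∀ w, w ∈ ω → (w, e) ∉ S → ∀ T : ℝ,
        ∃ t, T ≤ t ∧ (φ t u, e) ∉ S ∧ W (φ t u) e = W w e := by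
      intro e w hw hwe T
      obtain ⟨U, hUo, hwU, hU⟩ := hLC e w hwe
      obtain ⟨σs, hσ1, hσ2⟩ := hw
      have E1 : ∀ᶠ n in atTop, T ≤ σs n := hσ1.eventually_ge_atTop T
      have E2 : ∀ᶠ n in atTop, φ (σs n) u ∈ U := hσ2 (hUo.mem_nhds hwU)
      obtain ⟨n, hn1, hn2⟩ := (E1.and E2).exists
      exact ⟨σs n, hn1, (hU _ hn2).1, (hU _ hn2).2⟩
    have hM : ∀ e : X, (∀ σ, φ σ e = e) → ∀ t1 : ℝ, (φ t1 u, e) ∉ S →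
        ∀ t2 : ℝ, (φ t2 u, e) ∉ S → t1 ≤ t2 → W (φ t2 u) e ≤ W (φ t1 u) e := by
      intro e he
      have h1 : ∀ t ∈ {t : ℝ | (φ t u, e) ∉ S}, ∃ δ > (0:ℝ), ∀ s : ℝ, |s - t| < δ →
          s ∈ {t : ℝ | (φ t u, e) ∉ S} ∧ W (φ s u) e = W (φ t u) e := by
        intro t ht
        obtain ⟨U, hUo, hxU, hU⟩ := hLC e (φ t u) ht
        have hφu : Continuous fun s : ℝ => φ s u :=
          hφc.comp (continuous_id.prodMk continuous_const)
        have hpre : (fun s : ℝ => φ s u) ⁻¹' U ∈ nhds t :=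
          hφu.continuousAt.preimage_mem_nhds (hUo.mem_nhds hxU)
        rw [Metric.mem_nhds_iff] at hpre
        obtain ⟨δ, hδ, hball⟩ := hpre
        refine ⟨δ, hδ, fun s hs => ?_⟩
        have hmem : φ s u ∈ U := hball (by rwa [Metric.mem_ball, Real.dist_eq])
        exact ⟨(hU _ hmem).1, (hU _ hmem).2⟩
      have h2 : ∀ t ∉ {t : ℝ | (φ t u, e) ∉ S}, ∃ δ > (0:ℝ),
          (∀ s : ℝ, s ≠ t → |s - t| < δ → s ∈ {t : ℝ | (φ t u, e) ∉ S}) ∧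
          (∀ σ σ' : ℝ, -δ < σ → σ < 0 → 0 < σ' → σ' < δ →
            W (φ (t + σ') u) e < W (φ (t + σ) u) e) := by
        intro t ht
        rw [mem_setOf_eq, not_not] at ht
        have hneq : φ t u ≠ e := hcase t e he
        obtain ⟨ε₁, hε₁, hA4'⟩ := hA4 _ _ ht hneq
        obtain ⟨ε₂, hε₂, hA5'⟩ := hA5 _ _ ht hneq
        refine ⟨min ε₁ ε₂, lt_min hε₁ hε₂, ?_, ?_⟩
        · intro s hs hsd
          have h4 := hA4' (s - t) (sub_ne_zero.mpr hs) (lt_of_lt_of_le hsd (min_le_left _ _))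
          rw [he, ← hφadd, show s - t + t = s by ring] at h4
          exact h4
        · intro σ σ' hσ1 hσ2 hσ3 hσ4
          have h5 := hA5' σ σ' (lt_of_le_of_lt (neg_le_neg (min_le_right _ _)) hσ1) hσ2 hσ3
            (lt_of_lt_of_le hσ4 (min_le_right _ _))
          rw [he, he, ← hφadd, ← hφadd, add_comm σ' t, add_comm σ t] at h5
          exact h5
      have key := mono_aux {t : ℝ | (φ t u, e) ∉ S} (fun t => W (φ t u) e) h1 h2
      exact fun t1 ht1 t2 ht2 h => key t1 ht1 t2 ht2 h
    have hMat : ∀ e : X, (∀ σ, φ σ e = e) → ∀ w, w ∈ ω → w ≠ e → (w, e) ∉ S := by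
      intro e he w hw hne
      intro hS'
      obtain ⟨ε₁, hε₁, hA4'⟩ := hA4 _ _ hS' hne
      obtain ⟨ε₂, hε₂, hA5'⟩ := hA5 _ _ hS' hne
      have hm0 : 0 < min ε₁ ε₂ / 2 := by
        have := lt_min hε₁ hε₂; linarith
      have hm1 : min ε₁ ε₂ / 2 < ε₁ := by
        have h := min_le_left ε₁ ε₂; have := lt_min hε₁ hε₂; linarith
      have hm2 : min ε₁ ε₂ / 2 < ε₂ := by
        have h := min_le_right ε₁ ε₂; have := lt_min hε₁ hε₂; linarith
      have hplus : (φ (min ε₁ ε₂ / 2) w, e) ∉ S := by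
        have h := hA4' (min ε₁ ε₂ / 2) hm0.ne' (by rwa [abs_of_pos hm0])
        rwa [he] at h
      have hminus : (φ (-(min ε₁ ε₂ / 2)) w, e) ∉ S := by
        have h := hA4' (-(min ε₁ ε₂ / 2)) (neg_ne_zero.mpr hm0.ne')
          (by rwa [abs_neg, abs_of_pos hm0])
        rwa [he] at h
      have hdrop : W (φ (min ε₁ ε₂ / 2) w) e < W (φ (-(min ε₁ ε₂ / 2)) w) e := by
        have h := hA5' (-(min ε₁ ε₂ / 2)) (min ε₁ ε₂ / 2) (by linarith) (by linarith) hm0 hm2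
        rwa [he, he] at h
      obtain ⟨t0, _, ht0G, ht0f⟩ := hOM e _ (hinv w hw (min ε₁ ε₂ / 2)) hplus 0
      obtain ⟨t1, ht1ge, ht1G, ht1f⟩ := hOM e _ (hinv w hw (-(min ε₁ ε₂ / 2))) hminus t0
      have h := hM e he t0 ht0G t1 ht1G ht1ge
      rw [ht0f, ht1f] at h
      omega
    have hVal : ∀ e : X, (∀ σ, φ σ e = e) → ∀ w, w ∈ ω → ∀ w', w' ∈ ω → w ≠ e → w' ≠ e →
        W w e = W w' e := by
      intro e he w hw w' hw' hne hne'
      have hwS := hMat e he w hw hne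
      have hw'S := hMat e he w' hw' hne'
      have d1 : W w' e ≤ W w e := by
        obtain ⟨t0, _, ht0G, ht0f⟩ := hOM e w hw hwS 0
        obtain ⟨t1, ht1ge, ht1G, ht1f⟩ := hOM e w' hw' hw'S t0
        have h := hM e he t0 ht0G t1 ht1G ht1ge
        rwa [ht0f, ht1f] at h
      have d2 : W w e ≤ W w' e := by
        obtain ⟨t0, _, ht0G, ht0f⟩ := hOM e w' hw' hw'S 0
        obtain ⟨t1, ht1ge, ht1G, ht1f⟩ := hOM e w hw hwS t0
        have h := hM e he t0 ht0G t1 ht1G ht1ge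
        rwa [ht0f, ht1f] at h
      exact le_antisymm d2 d1
    by_cases hex : ∃ w, w ∈ ω ∧ ∃ e, e ∈ ω ∧ (∀ σ, φ σ e = e) ∧ w ≠ e
    · obtain ⟨w₀, hw₀, e₀, he₀ω, he₀, hne₀⟩ := hex
      refine ⟨W w₀ e₀, ?_⟩
      intro w hw e heω he hne
      by_cases hee : e = e₀
      · subst hee
        exact hVal e he w hw w₀ hw₀ hne hne₀
      · have h1 : W w e = W e₀ e := hVal e he w hw e₀ he₀ω hne (Ne.symm hee)
        have h2 : W e₀ e = W e e₀ := hWsym e₀ e (hMat e he e₀ he₀ω (Ne.symm hee))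
        have h3 : W e e₀ = W w₀ e₀ := hVal e₀ he₀ e heω w₀ hw₀ hee hne₀
        rw [h1, h2, h3]
    · refine ⟨0, ?_⟩
      intro w hw e heω he hne
      exact absurd ⟨w, hw, e, heω, he, hne⟩ hex
end

section
/- Under the abstract axioms (A1)–(A5), suppose u ∈ X, w ∈ ω(u), and α(w) ∩ ω(w) = ∅. Then there exists σ* ≥ 0 such that W(u¹, w¹) = k(w) for every u¹ ∈ cl{φ^σ(u) : σ ≥ σ*} and w¹ ∈ cl(γ(w)) with u¹ ≠ w¹, where k(w) is the constant value of W on distinct pairs from cl(γ(w)). In particular, π(φ^σ(u)) ∉ π(cl(γ(w))) for all σ ≥ σ*. -/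
/-!
Distinct points of `K = cl γ(w)` never cross: `W ≡ k` on them, so the strict drop (A5) is
impossible. Hence `π` is injective on `K`, sequential and topological limit sets agree there, and
`K = γ(w) ∪ α(w) ∪ ω(w)`. As `α(w) ∩ ω(w) = ∅`, `w` lies in neither limit set, so no orbit in `K`
spends more than a bounded time in a small neighbourhood `U` of `w`, and the orbit of `u`
never enters `K`.

Along a pair of distinct orbits `W` is nonincreasing, dropping at each crossing. By the tube lemma
`W = k` on pairs with first point near `w` and second in `K \ U`; as `u` returns near `w` at
arbitrarily late times, `k` is attained along every pair `(φ^s φ^τ u, φ^s y)`, `y ∈ K`, in every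
late window of bounded length. So `W ≥ k` on such pairs, and a crossing at a late time `τ` would
force `W ≥ k + 1` before `τ`, contradicting an earlier window. Thus the late orbit of `u` does not
cross `K`, `W ≡ k` there, and by continuity also on the closure, where (A4)–(A5) again rule out
crossings.
-/

open Filter Topology Set omegaLimit

theorem AntitoneOn.of_local {β : Type*} [Preorder β] {f : ℝ → β} {Z : Set ℝ}
    (h : ∀ s, ∃ ε > 0, Ioo (s - ε) (s + ε) \ {s} ⊆ Zᶜ ∧ AntitoneOn f (Ioo (s - ε) (s + ε) \ Z)) :
    AntitoneOn f Zᶜ := by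
  intro a ha b hb hab
  set B := {t ∈ Icc a b | t ∉ Z ∧ ∀ t' ∈ Icc a t, t' ∉ Z → f t' ≤ f a}
  have haB : a ∈ B := ⟨⟨le_rfl, hab⟩, ha, fun t' ht' _ => by rw [le_antisymm ht'.2 ht'.1]⟩
  have hBbdd : BddAbove B := ⟨b, fun t ht => ht.1.2⟩
  set c := sSup B
  have hac : a ≤ c := le_csSup hBbdd haB
  obtain ⟨ε, hε, hiso, hanti⟩ := h c
  obtain ⟨t₁, ht₁B, ht₁c⟩ := exists_lt_of_lt_csSup ⟨a, haB⟩ (sub_lt_self c hε)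
  have ht₁c' : t₁ ≤ c := le_csSup hBbdd ht₁B
  have below : ∀ t ∈ Ico a (c + ε), t ∉ Z → f t ≤ f a := by
    intro t ht htZ
    rcases le_or_gt t t₁ with h | h
    · exact ht₁B.2.2 t ⟨ht.1, h⟩ htZ
    · refine (hanti ⟨⟨ht₁c, by linarith⟩, ht₁B.2.1⟩ ⟨⟨by linarith, ht.2⟩, htZ⟩ h.le).trans ?_
      exact ht₁B.2.2 t₁ ⟨ht₁B.1.1, le_rfl⟩ ht₁B.2.1
  by_contra hfb
  have hcb : c + ε ≤ b := not_lt.1 fun hb' => hfb (below b ⟨hab, hb'⟩ hb)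
  have hmid : c + ε / 2 ∈ B := by
    refine ⟨⟨by linarith, by linarith⟩, hiso ⟨⟨by linarith, by linarith⟩, by simp [hε.ne']⟩,
      fun t' ht' ht'Z => below t' ⟨ht'.1, by linarith [ht'.2]⟩ ht'Z⟩
  linarith [le_csSup hBbdd hmid]

theorem exists_seq_tendsto_of_mapClusterPt_of_injOn {X Y ι : Type*} [TopologicalSpace X]
    [T2Space X] [TopologicalSpace Y] [T2Space Y] [FirstCountableTopology Y] {l : Filter ι}
    [l.IsCountablyGenerated] {K : Set X} (hK : IsCompact K) {π : X → Y} (hπ : Continuous π)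
    (hinj : InjOn π K) {f : ι → X} (hf : ∀ i, f i ∈ K) {z : X} (hz : MapClusterPt z l f) :
    ∃ ψ : ℕ → ι, Tendsto ψ atTop l ∧ Tendsto (f ∘ ψ) atTop (𝓝 z) := by
  obtain ⟨ψ, hπψ, hψ⟩ := (hz.continuousAt_comp hπ.continuousAt).exists_seq_tendsto
  have hzK : z ∈ K := hK.isClosed.mem_of_mapClusterPt hz (Eventually.of_forall hf)
  refine ⟨ψ, hψ, hK.tendsto_nhds_of_unique_mapClusterPt (Eventually.of_forall fun n => hf _)
    fun y hyK hy => hinj hyK hzK ?_⟩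
  exact eq_of_nhds_neBot ((hy.continuousAt_comp hπ.continuousAt).clusterPt.mono hπψ)

namespace Flow

variable {X : Type*} [TopologicalSpace X] (ϕ : Flow ℝ X)

theorem map_sub_map (t s : ℝ) (x : X) : ϕ (t - s) (ϕ s x) = ϕ t x := by
  rw [← ϕ.map_add, sub_add_cancel]

theorem continuous_prodMk (x y : X) : Continuous fun s => (ϕ s x, ϕ s y) :=
  (ϕ.continuous continuous_id continuous_const).prodMk (ϕ.continuous continuous_id continuous_const)

theorem _root_.IsInvariant.closure {s : Set X} (hs : IsInvariant ϕ s) :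
    IsInvariant ϕ (closure s) :=
  fun t => (hs t).closure (ϕ.continuous_toFun t)

theorem omegaLimit_subset_of_isInvariant (l : Filter ℝ) {C : Set X} (hC : IsClosed C)
    (hinv : IsInvariant ϕ C) {x : X} (hx : x ∈ C) : ω l ϕ {x} ⊆ C :=
  (omegaLimit_subset_closure_image2 l ϕ {x} univ_mem).trans <|
    closure_minimal (by rintro _ ⟨t, -, x', rfl, rfl⟩; exact hinv t hx) hC

theorem mem_orbit_of_mem_closure_of_notMem_omegaLimit [T2Space X] {x y : X}
    (hy : y ∈ closure (orbit ϕ x)) (htop : y ∉ ω⁺ ϕ {x}) (hbot : y ∉ ω⁻ ϕ {x}) :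
    y ∈ orbit ϕ x := by
  simp only [mem_omegaLimit_singleton_iff_mapClusterPt, mapClusterPt_iff_frequently,
    not_forall, not_frequently, exists_prop] at htop hbot
  obtain ⟨V₁, hV₁, hev₁⟩ := htop
  obtain ⟨V₂, hV₂, hev₂⟩ := hbot
  obtain ⟨b, hb⟩ := eventually_atTop.1 hev₁
  obtain ⟨a, ha⟩ := eventually_atBot.1 hev₂
  -- the orbit meets `V₁ ∩ V₂` only along the compact arc over `[a, b]`
  have harc : IsClosed ((fun t => ϕ t x) '' Icc a b) :=
    (isCompact_Icc.image (ϕ.continuous continuous_id continuous_const)).isClosed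
  by_contra hyo
  have hnhds : V₁ ∩ V₂ ∩ ((fun t => ϕ t x) '' Icc a b)ᶜ ∈ 𝓝 y :=
    inter_mem (inter_mem hV₁ hV₂) (harc.isOpen_compl.mem_nhds
      fun ⟨t, _, ht⟩ => hyo ⟨t, ht⟩)
  obtain ⟨_, ⟨⟨h₁, h₂⟩, harc'⟩, t, rfl⟩ := mem_closure_iff_nhds.1 hy _ hnhds
  exact harc' ⟨t, ⟨not_lt.1 fun h => ha t h.le h₂, not_lt.1 fun h => hb t h.le h₁⟩, rfl⟩

theorem isInvariant_omegaLimit_atTop (x : X) : IsInvariant ϕ (ω⁺ ϕ {x}) :=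
  ϕ.isInvariant_omegaLimit _ _ fun t => tendsto_atTop_add_const_left _ t tendsto_id

theorem isInvariant_omegaLimit_atBot (x : X) : IsInvariant ϕ (ω⁻ ϕ {x}) :=
  ϕ.isInvariant_omegaLimit _ _ fun t => tendsto_atBot_add_const_left _ t tendsto_id

theorem omegaLimit_atTop_singleton_map (t : ℝ) (x : X) : ω⁺ ϕ {ϕ t x} = ω⁺ ϕ {x} := by
  rw [← image_singleton,
    ϕ.omegaLimit_image_eq _ _ fun t => tendsto_atTop_add_const_right _ t tendsto_id]

theorem notMem_omegaLimit_self [CompactSpace X] {l l' : Filter ℝ} [l'.NeBot] {x : X}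
    (hinv : IsInvariant ϕ (ω l ϕ {x})) (h : Disjoint (ω l ϕ {x}) (ω l' ϕ {x})) :
    x ∉ ω l ϕ {x} := fun hx => by
  obtain ⟨z, hz⟩ := nonempty_omegaLimit l' ϕ {x} (singleton_nonempty x)
  exact h.ne_of_mem (ϕ.omegaLimit_subset_of_isInvariant l' (isClosed_omegaLimit _ _ _)
    hinv hx hz) hz rfl

variable [CompactSpace X] [T2Space X] {w : X}

theorem notMem_omegaLimit_of_mem_closure_orbit (hαω : Disjoint (ω⁻ ϕ {w}) (ω⁺ ϕ {w})) {y : X}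
    (hy : y ∈ closure (orbit ϕ w)) : w ∉ ω⁺ ϕ {y} := by
  have htop := ϕ.notMem_omegaLimit_self (ϕ.isInvariant_omegaLimit_atTop w) hαω.symm
  have hbot := ϕ.notMem_omegaLimit_self (ϕ.isInvariant_omegaLimit_atBot w) hαω
  by_cases hyt : y ∈ ω⁺ ϕ {w}
  · exact fun h => htop (ϕ.omegaLimit_subset_of_isInvariant _ (isClosed_omegaLimit _ _ _)
      (ϕ.isInvariant_omegaLimit_atTop w) hyt h)
  by_cases hyb : y ∈ ω⁻ ϕ {w}
  · exact fun h => hbot (ϕ.omegaLimit_subset_of_isInvariant _ (isClosed_omegaLimit _ _ _)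
      (ϕ.isInvariant_omegaLimit_atBot w) hyb h)
  obtain ⟨t, rfl⟩ := ϕ.mem_orbit_iff.1 (ϕ.mem_orbit_of_mem_closure_of_notMem_omegaLimit hy hyt hyb)
  rwa [ϕ.omegaLimit_atTop_singleton_map]

theorem notMem_closure_orbit (hαω : Disjoint (ω⁻ ϕ {w}) (ω⁺ ϕ {w})) {u : X}
    (hw : w ∈ ω⁺ ϕ {u}) (σ : ℝ) : ϕ σ u ∉ closure (orbit ϕ w) := fun h => by
  refine ϕ.notMem_omegaLimit_of_mem_closure_orbit hαω h ?_
  rwa [ϕ.omegaLimit_atTop_singleton_map]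

theorem exists_isOpen_forall_sub_le (hαω : Disjoint (ω⁻ ϕ {w}) (ω⁺ ϕ {w})) :
    ∃ U, IsOpen U ∧ w ∈ U ∧ ∃ T, ∀ y ∈ closure (orbit ϕ w), ∀ t t',
      ϕ t y ∈ U → ϕ t' y ∈ U → t' ≤ t + T := by
  set L := ω⁺ ϕ {w} ∪ ω⁻ ϕ {w}
  have hLinv : IsInvariant ϕ L := fun t =>
    (ϕ.isInvariant_omegaLimit_atTop w t).union_union (ϕ.isInvariant_omegaLimit_atBot w t)
  have hwL : w ∉ L := fun h => h.elim
    (ϕ.notMem_omegaLimit_self (ϕ.isInvariant_omegaLimit_atTop w) hαω.symm)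
    (ϕ.notMem_omegaLimit_self (ϕ.isInvariant_omegaLimit_atBot w) hαω)
  obtain ⟨N, hN, hNcl, hNL⟩ := exists_mem_nhds_isClosed_subset
    ((isClosed_omegaLimit _ _ _).union (isClosed_omegaLimit _ _ _) |>.isOpen_compl.mem_nhds hwL)
  have hLN : L ⊆ Nᶜ := subset_compl_comm.1 hNL
  -- the orbit of `w` stays in `N` only for a bounded time
  obtain ⟨b, hb⟩ := eventually_atTop.1 <| eventually_mapsTo_of_isOpen_of_omegaLimit_subset _ ϕ {w}
    hNcl.isOpen_compl (subset_union_left.trans hLN)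
  obtain ⟨a, ha⟩ := eventually_atBot.1 <| eventually_mapsTo_of_isOpen_of_omegaLimit_subset _ ϕ {w}
    hNcl.isOpen_compl (subset_union_right.trans hLN)
  refine ⟨interior N, isOpen_interior, mem_interior_iff_mem_nhds.2 hN, b - a,
    fun y hy t t' ht ht' => ?_⟩
  by_cases hyL : y ∈ L
  · exact absurd (interior_subset ht) (hLN (hLinv t hyL))
  obtain ⟨s, rfl⟩ := ϕ.mem_orbit_iff.1 (ϕ.mem_orbit_of_mem_closure_of_notMem_omegaLimit hy
    (fun h => hyL (Or.inl h)) (fun h => hyL (Or.inr h)))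
  rw [← ϕ.map_add] at ht ht'
  have h₁ : a < t + s := not_le.1 fun h => ha _ h rfl (interior_subset ht)
  have h₂ : t' + s < b := not_le.1 fun h => hb _ h rfl (interior_subset ht')
  linarith

end Flow

/-- Axioms (A1), (A4), (A5) for the flow `ϕ`, the crossing set `S` and the functional `W`. -/
structure ZeroNumberAxioms {X : Type*} [TopologicalSpace X] (ϕ : Flow ℝ X) (S : Set (X × X))
    (W : X → X → ℤ) : Prop where
  isClosed : IsClosed S
  continuousOn : ContinuousOn (fun q : X × X => W q.1 q.2) Sᶜ
  escape : ∀ u v : X, (u, v) ∈ S → u ≠ v →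
    ∃ ε > (0 : ℝ), ∀ σ : ℝ, σ ≠ 0 → |σ| < ε → (ϕ σ u, ϕ σ v) ∉ S
  drop : ∀ u v : X, (u, v) ∈ S → u ≠ v →
    ∃ ε > (0 : ℝ), ∀ σ σ' : ℝ, -ε < σ → σ < 0 → 0 < σ' → σ' < ε →
      W (ϕ σ' u) (ϕ σ' v) < W (ϕ σ u) (ϕ σ v)

namespace ZeroNumberAxioms

variable {X : Type*} [TopologicalSpace X] {ϕ : Flow ℝ X} {S : Set (X × X)} {W : X → X → ℤ}

theorem isOpen_setOf_eq (hϕW : ZeroNumberAxioms ϕ S W) (j : ℤ) :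
    IsOpen {q : X × X | q ∉ S ∧ W q.1 q.2 = j} :=
  hϕW.continuousOn.isOpen_inter_preimage hϕW.isClosed.isOpen_compl (isOpen_discrete {j})

theorem continuousOn_flow (hϕW : ZeroNumberAxioms ϕ S W) (x y : X) :
    ContinuousOn (fun s => W (ϕ s x) (ϕ s y)) {s | (ϕ s x, ϕ s y) ∈ S}ᶜ :=
  hϕW.continuousOn.comp (ϕ.continuous_prodMk x y).continuousOn fun _ hs => hs

theorem antitoneOn (hϕW : ZeroNumberAxioms ϕ S W) {x y : X} (hxy : x ≠ y) :
    AntitoneOn (fun s => W (ϕ s x) (ϕ s y)) {s | (ϕ s x, ϕ s y) ∈ S}ᶜ := by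
  set Z := {s | (ϕ s x, ϕ s y) ∈ S}
  have hconst : ∀ I : Set ℝ, IsPreconnected I → I ⊆ Zᶜ → ∀ t₁ ∈ I, ∀ t₂ ∈ I,
      W (ϕ t₂ x) (ϕ t₂ y) ≤ W (ϕ t₁ x) (ϕ t₁ y) := fun I hI hIZ t₁ h₁ t₂ h₂ =>
    (hI.constant ((hϕW.continuousOn_flow x y).mono hIZ) h₂ h₁).le
  refine AntitoneOn.of_local fun s => ?_
  by_cases hs : s ∈ Z
  · have hne : ϕ s x ≠ ϕ s y := (ϕ.toHomeomorph s).injective.ne hxy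
    obtain ⟨ε₄, hε₄, hesc⟩ := hϕW.escape _ _ hs hne
    obtain ⟨ε₅, hε₅, hdrop⟩ := hϕW.drop _ _ hs hne
    have hiso : Ioo (s - min ε₄ ε₅) (s + min ε₄ ε₅) \ {s} ⊆ Zᶜ := by
      rintro t ⟨⟨h₁, h₂⟩, ht⟩
      have := hesc (t - s) (sub_ne_zero.2 ht) (abs_sub_lt_iff.2 ⟨by
        linarith [min_le_left ε₄ ε₅], by linarith [min_le_left ε₄ ε₅]⟩)
      rwa [ϕ.map_sub_map, ϕ.map_sub_map] at this
    refine ⟨min ε₄ ε₅, lt_min hε₄ hε₅, hiso, ?_⟩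
    rintro t₁ ⟨⟨h₁, h₁'⟩, ht₁⟩ t₂ ⟨⟨h₂, h₂'⟩, ht₂⟩ h12
    have hm := min_le_right ε₄ ε₅
    rcases lt_or_gt_of_ne (show t₁ ≠ s by rintro rfl; exact ht₁ hs) with hl₁ | hr₁ <;>
      rcases lt_or_gt_of_ne (show t₂ ≠ s by rintro rfl; exact ht₂ hs) with hl₂ | hr₂
    · exact hconst (Ioo (s - min ε₄ ε₅) s) isPreconnected_Ioo
        (fun t ht => hiso ⟨⟨ht.1, by linarith [ht.2]⟩, ht.2.ne⟩) t₁ ⟨h₁, hl₁⟩ t₂ ⟨h₂, hl₂⟩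
    · have := hdrop (t₁ - s) (t₂ - s) (by linarith) (by linarith) (by linarith) (by linarith)
      rw [ϕ.map_sub_map, ϕ.map_sub_map, ϕ.map_sub_map, ϕ.map_sub_map] at this
      exact this.le
    · linarith
    · exact hconst (Ioo s (s + min ε₄ ε₅)) isPreconnected_Ioo
        (fun t ht => hiso ⟨⟨by linarith [ht.1], ht.2⟩, ht.1.ne'⟩) t₁ ⟨hr₁, h₁'⟩ t₂ ⟨hr₂, h₂'⟩
  · have hZ : IsOpen Zᶜ := (hϕW.isClosed.preimage (ϕ.continuous_prodMk x y)).isOpen_compl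
    obtain ⟨ε, hε, hball⟩ := Metric.isOpen_iff.1 hZ s hs
    rw [Real.ball_eq_Ioo] at hball
    exact ⟨ε, hε, sdiff_subset.trans hball, fun t₁ h₁ t₂ h₂ _ =>
      hconst _ isPreconnected_Ioo hball t₁ h₁.1 t₂ h₂.1⟩

theorem notMem_of_forall_eq (hϕW : ZeroNumberAxioms ϕ S W) {p q : X} (hpq : p ≠ q) {k : ℤ}
    {ε : ℝ} (hε : 0 < ε) (h : ∀ σ : ℝ, σ ≠ 0 → |σ| < ε → W (ϕ σ p) (ϕ σ q) = k) :
    (p, q) ∉ S := fun hS => by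
  obtain ⟨ε', hε', hdrop⟩ := hϕW.drop p q hS hpq
  obtain ⟨δ, hδ, hδε, hδε'⟩ : ∃ δ, 0 < δ ∧ δ < ε ∧ δ < ε' :=
    ⟨min ε ε' / 2, by positivity, by linarith [min_le_left ε ε', lt_min hε hε'],
      by linarith [min_le_right ε ε', lt_min hε hε']⟩
  have := hdrop (-δ) δ (by linarith) (by linarith) hδ hδε'
  rw [h δ hδ.ne' (by rwa [abs_of_pos hδ]), h (-δ) (by linarith) (by rwa [abs_neg, abs_of_pos hδ])]
    at this
  exact lt_irrefl k this

theorem notMem_of_isInvariant (hϕW : ZeroNumberAxioms ϕ S W) {K : Set X} (hK : IsInvariant ϕ K)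
    {k : ℤ} (hk : ∀ v ∈ K, ∀ v' ∈ K, v ≠ v' → W v v' = k) {v v' : X} (hv : v ∈ K) (hv' : v' ∈ K)
    (hne : v ≠ v') : (v, v') ∉ S :=
  hϕW.notMem_of_forall_eq hne one_pos fun σ _ _ =>
    hk _ (hK σ hv) _ (hK σ hv') ((ϕ.toHomeomorph σ).injective.ne hne)

/-- `(ϕ s (ϕ τ u), ϕ s y)` is the pair `(ϕ τ u, y)` moved by time `s`; the window `[N, M]`
bounds the time `s + τ` elapsed along the orbit of `u`. -/
def AttainsInWindows (ϕ : Flow ℝ X) (S : Set (X × X)) (W : X → X → ℤ) (K : Set X) (u : X)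
    (k : ℤ) : Prop :=
  ∀ N, ∃ M, ∀ τ, ∀ y ∈ K, ∃ s, N ≤ s + τ ∧ s + τ ≤ M ∧
    (ϕ s (ϕ τ u), ϕ s y) ∉ S ∧ W (ϕ s (ϕ τ u)) (ϕ s y) = k

theorem attainsInWindows (hϕW : ZeroNumberAxioms ϕ S W) {K : Set X} (hKc : IsCompact K)
    (hKinv : IsInvariant ϕ K) {U : Set X} (hUo : IsOpen U) {T : ℝ}
    (hT : ∀ y ∈ K, ∀ t t', ϕ t y ∈ U → ϕ t' y ∈ U → t' ≤ t + T) {k : ℤ} {u w : X}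
    (hw : w ∈ ω⁺ ϕ {u}) (hkK : ∀ z ∈ K \ U, (w, z) ∉ S ∧ W w z = k) :
    AttainsInWindows ϕ S W K u k := by
  obtain ⟨V, V', hVo, -, hwV, hV', hVV'⟩ := generalized_tube_lemma isCompact_singleton
    (hKc.diff hUo) (hϕW.isOpen_setOf_eq k) (by rintro ⟨_, z⟩ ⟨rfl, hz⟩; exact hkK z hz)
  have hfreq : ∃ᶠ t in atTop, ϕ t u ∈ V :=
    ((mem_omegaLimit_singleton_iff_mapClusterPt _ _ _ _).1 hw).frequently (hVo.mem_nhds (hwV rfl))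
  intro N
  obtain ⟨t₁, ht₁V, ht₁N⟩ := (hfreq.and_eventually (eventually_ge_atTop N)).exists
  obtain ⟨t₂, ht₂V, ht₂⟩ :=
    (hfreq.and_eventually (eventually_ge_atTop (max t₁ (t₁ + T + 1)))).exists
  have h₁₂ := max_le_iff.1 ht₂
  refine ⟨t₂, fun τ y hy => ?_⟩
  -- the orbit of `y` cannot be in `U` at both times, which are more than `T` apart
  obtain ⟨t, ⟨htN, htM⟩, htV, htU⟩ : ∃ t ∈ Icc N t₂, ϕ t u ∈ V ∧ ϕ (t - τ) y ∉ U := by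
    by_cases h₁ : ϕ (t₁ - τ) y ∈ U
    · exact ⟨t₂, ⟨by linarith, le_rfl⟩, ht₂V, fun h₂ => by linarith [hT y hy _ _ h₁ h₂]⟩
    · exact ⟨t₁, ⟨ht₁N, h₁₂.1⟩, ht₁V, h₁⟩
  refine ⟨t - τ, by linarith, by linarith, ?_⟩
  rw [ϕ.map_sub_map]
  exact hVV' ⟨htV, hV' ⟨hKinv _ hy, htU⟩⟩

variable {K : Set X} {u : X} {k : ℤ}

theorem le_of_attainsInWindows (hϕW : ZeroNumberAxioms ϕ S W) (hu : ∀ τ, ϕ τ u ∉ K)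
    (hK : AttainsInWindows ϕ S W K u k) {τ s : ℝ} {y : X} (hy : y ∈ K)
    (hs : (ϕ s (ϕ τ u), ϕ s y) ∉ S) : k ≤ W (ϕ s (ϕ τ u)) (ϕ s y) := by
  obtain ⟨M, hM⟩ := hK (s + τ)
  obtain ⟨s', hs', -, hs'S, hs'k⟩ := hM τ y hy
  have hne : ϕ τ u ≠ y := fun h => hu τ (h ▸ hy)
  rw [← hs'k]
  exact hϕW.antitoneOn hne hs hs'S (by linarith)

theorem exists_forall_notMem (hϕW : ZeroNumberAxioms ϕ S W) (hu : ∀ τ, ϕ τ u ∉ K)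
    (hK : AttainsInWindows ϕ S W K u k) : ∃ σ₀, 0 ≤ σ₀ ∧ ∀ τ ≥ σ₀, ∀ y ∈ K, (ϕ τ u, y) ∉ S := by
  obtain ⟨M, hM⟩ := hK 0
  refine ⟨max M 0 + 1, by positivity, fun τ hτ y hy hS => ?_⟩
  have hne : ϕ τ u ≠ y := fun h => hu τ (h ▸ hy)
  obtain ⟨ε₄, hε₄, hesc⟩ := hϕW.escape _ _ hS hne
  obtain ⟨ε₅, hε₅, hdrop⟩ := hϕW.drop _ _ hS hne
  obtain ⟨δ, hδ, hδ₄, hδ₅, hδ₁⟩ : ∃ δ, 0 < δ ∧ δ < ε₄ ∧ δ < ε₅ ∧ δ < 1 :=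
    ⟨min (min ε₄ ε₅) 1 / 2, by positivity, by grind, by grind, by grind⟩
  have hpost := hesc δ hδ.ne' (by rwa [abs_of_pos hδ])
  have hpre := hesc (-δ) (by linarith) (by rwa [abs_neg, abs_of_pos hδ])
  -- the crossing at `τ` raises `W` above `k` just before `τ`, and it cannot drop back to `k`
  have hcross := (hϕW.le_of_attainsInWindows hu hK hy hpost).trans_lt
    (hdrop (-δ) δ (by linarith) (by linarith) hδ hδ₅)
  obtain ⟨s, -, hsM, hsS, hsk⟩ := hM τ y hy
  have := hϕW.antitoneOn hne hsS hpre (by linarith [le_max_left M 0])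
  simp only [hsk] at this
  omega

theorem exists_forall_eq (hϕW : ZeroNumberAxioms ϕ S W) (hKinv : IsInvariant ϕ K)
    (hu : ∀ τ, ϕ τ u ∉ K) (hK : AttainsInWindows ϕ S W K u k) :
    ∃ σ₀, 0 ≤ σ₀ ∧ ∀ τ ≥ σ₀, ∀ y ∈ K, (ϕ τ u, y) ∉ S ∧ W (ϕ τ u) y = k := by
  obtain ⟨σ₀, hσ₀, hno⟩ := hϕW.exists_forall_notMem hu hK
  refine ⟨σ₀, hσ₀, fun τ hτ y hy => ⟨hno τ hτ y hy, ?_⟩⟩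
  obtain ⟨M, hM⟩ := hK τ
  obtain ⟨s, hs, -, -, hsk⟩ := hM τ y hy
  have hoff : Ici 0 ⊆ {r | (ϕ r (ϕ τ u), ϕ r y) ∈ S}ᶜ := fun r hr => by
    have := hno (r + τ) (by linarith [mem_Ici.1 hr]) _ (hKinv r hy)
    rwa [ϕ.map_add] at this
  have := isPreconnected_Ici.constant ((hϕW.continuousOn_flow _ _).mono hoff) self_mem_Ici
    (show s ∈ Ici 0 from mem_Ici.2 (by linarith))
  rwa [ϕ.map_zero_apply, ϕ.map_zero_apply, hsk] at this

theorem eq_of_mem_closure (hϕW : ZeroNumberAxioms ϕ S W) {A B : Set X}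
    (h : ∀ p ∈ A, ∀ q ∈ B, (p, q) ∉ S → W p q = k) :
    ∀ p ∈ closure A, ∀ q ∈ B, (p, q) ∉ S → W p q = k := by
  intro p hp q hq hpq
  have hO : {p' | (p', q) ∈ {r : X × X | r ∉ S ∧ W r.1 r.2 = W p q}} ∈ 𝓝 p :=
    (continuous_id.prodMk continuous_const).continuousAt.preimage_mem_nhds
      ((hϕW.isOpen_setOf_eq _).mem_nhds ⟨hpq, rfl⟩)
  obtain ⟨p', ⟨hp'S, hp'W⟩, hp'A⟩ := mem_closure_iff_nhds.1 hp _ hO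
  exact hp'W ▸ h p' hp'A q hq hp'S

end ZeroNumberAxioms

theorem ZeroNumberAxioms.exists_forall_eq_of_mem_omegaLimit {X : Type*} [TopologicalSpace X]
    [CompactSpace X] [T2Space X] {ϕ : Flow ℝ X} {S : Set (X × X)} {W : X → X → ℤ}
    (hϕW : ZeroNumberAxioms ϕ S W) {u w : X} (hw : w ∈ ω⁺ ϕ {u})
    (hαω : Disjoint (ω⁻ ϕ {w}) (ω⁺ ϕ {w})) {k : ℤ}
    (hk : ∀ w₁ ∈ closure (ϕ.orbit w), ∀ w₂ ∈ closure (ϕ.orbit w), w₁ ≠ w₂ → W w₁ w₂ = k) :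
    ∃ σ₀, 0 ≤ σ₀ ∧ ∀ u₁ ∈ closure ((fun t => ϕ t u) '' Ici σ₀), ∀ w₁ ∈ closure (ϕ.orbit w),
      u₁ ≠ w₁ → (u₁, w₁) ∉ S ∧ W u₁ w₁ = k := by
  set K := closure (ϕ.orbit w)
  have hKinv : IsInvariant ϕ K := (ϕ.isInvariant_orbit w).closure
  obtain ⟨U, hUo, hwU, T, hT⟩ := ϕ.exists_isOpen_forall_sub_le hαω
  have hK := hϕW.attainsInWindows isClosed_closure.isCompact hKinv hUo hT hw
    fun z ⟨hzK, hzU⟩ => have hwz : w ≠ z := fun h => hzU (h ▸ hwU)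
      ⟨hϕW.notMem_of_isInvariant hKinv hk (subset_closure (ϕ.mem_orbit_self w)) hzK hwz,
        hk _ (subset_closure (ϕ.mem_orbit_self w)) _ hzK hwz⟩
  obtain ⟨σ₀, hσ₀, hlate⟩ := hϕW.exists_forall_eq hKinv (ϕ.notMem_closure_orbit hαω hw) hK
  have htail : ∀ p ∈ closure ((fun t => ϕ t u) '' Ici σ₀), ∀ q ∈ K, (p, q) ∉ S → W p q = k :=
    hϕW.eq_of_mem_closure (by rintro _ ⟨τ, hτ, rfl⟩ q hq -; exact (hlate τ hτ q hq).2)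
  refine ⟨σ₀ + 1, by linarith, fun u₁ hu₁ w₁ hw₁ hne => ?_⟩
  have hshift : ∀ σ, -1 ≤ σ → ϕ σ u₁ ∈ closure ((fun t => ϕ t u) '' Ici σ₀) := by
    intro σ hσ
    refine MapsTo.closure ?_ (ϕ.continuous_toFun σ) hu₁
    rintro _ ⟨t, ht, rfl⟩
    exact ⟨σ + t, mem_Ici.2 (by linarith [mem_Ici.1 ht]), ϕ.map_add σ t u⟩
  have hS : (u₁, w₁) ∉ S := fun hS => by
    obtain ⟨ε, hε, hesc⟩ := hϕW.escape _ _ hS hne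
    refine hϕW.notMem_of_forall_eq hne (k := k) (lt_min hε one_pos) (fun σ hσ0 hσ => ?_) hS
    have hσ' := lt_min_iff.1 hσ
    exact htail _ (hshift σ (by linarith [neg_abs_le σ])) _ (hKinv σ hw₁) (hesc σ hσ0 hσ'.1)
  exact ⟨hS, htail u₁ (closure_mono (image_mono (Ici_subset_Ici.2 (by linarith))) hu₁) w₁ hw₁ hS⟩

theorem stmt_19_general {X : Type*} [TopologicalSpace X] [CompactSpace X] [T2Space X]
    (φ : ℝ → X → X)
    (hφc : Continuous fun p : ℝ × X => φ p.1 p.2)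
    (hφ0 : ∀ x, φ 0 x = x)
    (hφadd : ∀ σ σ' x, φ (σ + σ') x = φ σ (φ σ' x))
    (S : Set (X × X)) (hScl : IsClosed S)
    (W : X → X → ℤ)
    -- (A1)
    (hWc : ContinuousOn (fun q : X × X => W q.1 q.2) Sᶜ)
    -- (A2), (A3)
    (π : X → ℝ × ℝ) (hπc : Continuous π)
    (hA3 : ∀ u v : X, π u = π v → (u, v) ∈ S)
    -- (A4)
    (hA4 : ∀ u v : X, (u, v) ∈ S → u ≠ v →
      ∃ ε > (0 : ℝ), ∀ σ : ℝ, σ ≠ 0 → |σ| < ε → (φ σ u, φ σ v) ∉ S)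
    -- (A5)
    (hA5 : ∀ u v : X, (u, v) ∈ S → u ≠ v →
      ∃ ε > (0 : ℝ), ∀ σ σ' : ℝ, -ε < σ → σ < 0 → 0 < σ' → σ' < ε →
        W (φ σ' u) (φ σ' v) < W (φ σ u) (φ σ v))
    (u w : X)
    (hw : ∃ σs : ℕ → ℝ, Tendsto σs atTop atTop ∧
      Tendsto (fun n => φ (σs n) u) atTop (nhds w))
    -- α(w) ∩ ω(w) = ∅
    (hαω : {z : X | ∃ σs : ℕ → ℝ, Tendsto σs atTop atBot ∧
        Tendsto (fun n => φ (σs n) w) atTop (nhds z)} ∩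
      {z : X | ∃ σs : ℕ → ℝ, Tendsto σs atTop atTop ∧
        Tendsto (fun n => φ (σs n) w) atTop (nhds z)} = ∅)
    -- k is the constant value of W on distinct pairs from cl(γ(w))
    (k : ℤ)
    (hk : ∀ w₁ ∈ closure {x : X | ∃ σ : ℝ, x = φ σ w},
      ∀ w₂ ∈ closure {x : X | ∃ σ : ℝ, x = φ σ w},
        w₁ ≠ w₂ → W w₁ w₂ = k) :
    ∃ σstar : ℝ, 0 ≤ σstar ∧
      (∀ u₁ ∈ closure {x : X | ∃ σ : ℝ, σstar ≤ σ ∧ x = φ σ u},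
        ∀ w₁ ∈ closure {x : X | ∃ σ : ℝ, x = φ σ w},
          u₁ ≠ w₁ → (u₁, w₁) ∉ S ∧ W u₁ w₁ = k) ∧
      (∀ σ : ℝ, σstar ≤ σ →
        π (φ σ u) ∉ π '' closure {x : X | ∃ σ' : ℝ, x = φ σ' w}) := by
  let ϕ : Flow ℝ X := ⟨φ, hφc, hφadd, hφ0⟩
  have hϕW : ZeroNumberAxioms ϕ S W := ⟨hScl, hWc, hA4, hA5⟩
  have horbit : {x | ∃ σ, x = φ σ w} = ϕ.orbit w := by ext; exact exists_congr fun _ => eq_comm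
  have htail : ∀ c, {x | ∃ σ, c ≤ σ ∧ x = φ σ u} = (fun t => ϕ t u) '' Ici c := by
    intro c; ext; exact exists_congr fun _ => and_congr Iff.rfl eq_comm
  simp only [horbit, htail] at hk ⊢
  have hπK : InjOn π (closure (ϕ.orbit w)) := fun v hv v' hv' hπ => not_not.1 fun hne =>
    hϕW.notMem_of_isInvariant (ϕ.isInvariant_orbit w).closure hk hv hv' hne (hA3 v v' hπ)
  have hseq : ∀ l : Filter ℝ, l.IsCountablyGenerated → ∀ z ∈ ω l ϕ {w},
      ∃ σs : ℕ → ℝ, Tendsto σs atTop l ∧ Tendsto (fun n => φ (σs n) w) atTop (𝓝 z) :=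
    fun l _ z hz => exists_seq_tendsto_of_mapClusterPt_of_injOn isClosed_closure.isCompact hπc hπK
      (fun t => subset_closure (ϕ.mem_orbit w t))
      ((mem_omegaLimit_singleton_iff_mapClusterPt _ _ _ _).1 hz)
  have hαω' : Disjoint (ω⁻ ϕ {w}) (ω⁺ ϕ {w}) := Set.disjoint_iff_inter_eq_empty.2 <|
    subset_empty_iff.1 <| hαω ▸ inter_subset_inter (hseq atBot inferInstance)
      (hseq atTop inferInstance)
  have hw' : w ∈ ω⁺ ϕ {u} := by
    obtain ⟨σs, hσs, hlim⟩ := hw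
    exact (mem_omegaLimit_singleton_iff_mapClusterPt _ _ _ _).2 (hlim.mapClusterPt.of_comp hσs)
  obtain ⟨σ₀, hσ₀, hW⟩ := hϕW.exists_forall_eq_of_mem_omegaLimit hw' hαω' hk
  refine ⟨σ₀, hσ₀, hW, fun σ hσ ⟨w₁, hw₁, hπ⟩ => ?_⟩
  have hne : φ σ u ≠ w₁ := by
    rintro rfl
    exact ϕ.notMem_closure_orbit hαω' hw' σ hw₁
  exact (hW _ (subset_closure ⟨σ, hσ, rfl⟩) w₁ hw₁ hne).1 (hA3 _ _ hπ.symm)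

/-- under axioms (A1)–(A5), if w ∈ ω(u) and α(w) ∩ ω(w) = ∅,
then there exists σ* ≥ 0 such that W(u¹, w¹) = k(w) for all
u¹ ∈ cl{φ^σ(u) : σ ≥ σ*} and w¹ ∈ cl(γ(w)) with u¹ ≠ w¹, where k(w) is the
constant value of W on distinct pairs from cl(γ(w)); in particular
π(φ^σ(u)) ∉ π(cl(γ(w))) for all σ ≥ σ*. -/
theorem stmt_19 {X : Type*} [TopologicalSpace X] [CompactSpace X] [T2Space X]
    (φ : ℝ → X → X)
    (hφc : Continuous fun p : ℝ × X => φ p.1 p.2)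
    (hφ0 : ∀ x, φ 0 x = x)
    (hφadd : ∀ σ σ' x, φ (σ + σ') x = φ σ (φ σ' x))
    (S : Set (X × X)) (hScl : IsClosed S)
    (hΔS : ∀ x : X, (x, x) ∈ S)
    (W : X → X → ℤ)
    -- (A1)
    (hWc : ContinuousOn (fun q : X × X => W q.1 q.2) Sᶜ)
    (hWsym : ∀ u v : X, (u, v) ∉ S → W u v = W v u)
    -- (A2), (A3)
    (π : X → ℝ × ℝ) (hπc : Continuous π)
    (hA3 : ∀ u v : X, π u = π v → (u, v) ∈ S)
    -- (A4)
    (hA4 : ∀ u v : X, (u, v) ∈ S → u ≠ v →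
      ∃ ε > (0 : ℝ), ∀ σ : ℝ, σ ≠ 0 → |σ| < ε → (φ σ u, φ σ v) ∉ S)
    -- (A5)
    (hA5 : ∀ u v : X, (u, v) ∈ S → u ≠ v →
      ∃ ε > (0 : ℝ), ∀ σ σ' : ℝ, -ε < σ → σ < 0 → 0 < σ' → σ' < ε →
        W (φ σ' u) (φ σ' v) < W (φ σ u) (φ σ v))
    (u w : X)
    (hw : ∃ σs : ℕ → ℝ, Tendsto σs atTop atTop ∧
      Tendsto (fun n => φ (σs n) u) atTop (nhds w))
    -- α(w) ∩ ω(w) = ∅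
    (hαω : {z : X | ∃ σs : ℕ → ℝ, Tendsto σs atTop atBot ∧
        Tendsto (fun n => φ (σs n) w) atTop (nhds z)} ∩
      {z : X | ∃ σs : ℕ → ℝ, Tendsto σs atTop atTop ∧
        Tendsto (fun n => φ (σs n) w) atTop (nhds z)} = ∅)
    -- k is the constant value of W on distinct pairs from cl(γ(w))
    (k : ℤ)
    (hk : ∀ w₁ ∈ closure {x : X | ∃ σ : ℝ, x = φ σ w},
      ∀ w₂ ∈ closure {x : X | ∃ σ : ℝ, x = φ σ w},
        w₁ ≠ w₂ → W w₁ w₂ = k) :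
    ∃ σstar : ℝ, 0 ≤ σstar ∧
      (∀ u₁ ∈ closure {x : X | ∃ σ : ℝ, σstar ≤ σ ∧ x = φ σ u},
        ∀ w₁ ∈ closure {x : X | ∃ σ : ℝ, x = φ σ w},
          u₁ ≠ w₁ → (u₁, w₁) ∉ S ∧ W u₁ w₁ = k) ∧
      (∀ σ : ℝ, σstar ≤ σ →
        π (φ σ u) ∉ π '' closure {x : X | ∃ σ' : ℝ, x = φ σ' w}) :=
  stmt_19_general φ hφc hφ0 hφadd S hScl W hWc π hπc hA3 hA4 hA5 u w hw hαω k hk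
end
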